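/- arXiv:2102.10876 — 9 statements merged into one kernel-verified Lean document; each statement's English description precedes it below -/
import Mathlib

section
/- Let G be a finite group with |G| > 1 and let C be a generating set of G. If X is a normal C-closed generating set for G, then X \ (X ∩ Φ(G;C)) is also a normal C-closed generating set for G. -/
/-!
Both `X` and the complement of `Φ(G;C)` are stable under conjugation and `Aut(G;C)`, hence so is
`S = X \ Φ(G;C)`, and then `⟨S⟩` is a normal `Aut(G;C)`-invariant subgroup. If it were proper, it
would lie in some maximal member `M` of `A(G;C)` (as `G` is finite); but `Φ(G;C) ≤ M` too, so
`X ⊆ S ∪ Φ(G;C) ⊆ M` and `G = ⟨X⟩ ≤ M`, contradicting properness of `M`.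
-/

namespace NETCayley

variable {G : Type*} [Group G]

/-- `Aut(G;C)`: the subgroup of `MulAut G` consisting of automorphisms `σ` with `C^σ = C`. -/
def autSub (C : Set G) : Subgroup (MulAut G) where
  carrier := {σ : MulAut G | ⇑σ '' C = C}
  one_mem' := by simp
  mul_mem' := by
    intro a b ha hb
    rw [Set.mem_setOf_eq] at ha hb ⊢
    have h : ⇑(a * b) = ⇑a ∘ ⇑b := rfl
    rw [h, Set.image_comp, hb, ha]
  inv_mem' := by
    intro a ha
    rw [Set.mem_setOf_eq] at ha ⊢
    conv_lhs => rw [← ha]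
    rw [← Set.image_comp]
    have h : ⇑a⁻¹ ∘ ⇑a = id := by funext x; simp
    rw [h, Set.image_id]

/-- `A(G;C)`: proper normal `Aut(G;C)`-invariant subgroups of `G`. -/
def setA (C : Set G) : Set (Subgroup G) :=
  {N | N.Normal ∧ N ≠ ⊤ ∧ ∀ σ ∈ autSub C, N.map (σ : MulAut G).toMonoidHom = N}

/-- `A_max(G;C)`: maximal (by inclusion) elements of `A(G;C)`. -/
def setAmax (C : Set G) : Set (Subgroup G) :=
  {N | N ∈ setA C ∧ ∀ M ∈ setA C, N ≤ M → N = M}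

/-- `Φ(G;C)`: the intersection of all members of `A_max(G;C)`. -/
def PhiC (C : Set G) : Subgroup G := sInf (setAmax C)

/-- `X` is normal `C`-closed: `(x^g)^σ ∈ X` for all `x ∈ X`, `g ∈ G`, `σ ∈ Aut(G;C)`. -/
def NormalCClosed (C X : Set G) : Prop :=
  ∀ x ∈ X, ∀ g : G, ∀ σ ∈ autSub C, σ (g⁻¹ * x * g) ∈ X

/-- The normal `C`-closure of `X`: `{(x^g)^σ : x ∈ X, g ∈ G, σ ∈ Aut(G;C)}`. -/
def normalCClosure (C X : Set G) : Set G :=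
  {y | ∃ x ∈ X, ∃ g : G, ∃ σ ∈ autSub C, σ (g⁻¹ * x * g) = y}

/-- The orbit of `c` under the natural action of `Aut(G;C)`. -/
def orbitC (C : Set G) (c : G) : Set G := {y | ∃ σ ∈ autSub C, σ c = y}

/-- `C` is a transitive set: either `Aut(G;C)` is transitive on `C`, or there are exactly two
orbits `C₊`, `C₋` on `C` with `C = C₊ ∪ C₋` and `C₋ = C₊⁻¹`. -/
def TransSet (C : Set G) : Prop :=
  (∀ c ∈ C, ∀ c' ∈ C, ∃ σ ∈ autSub C, σ c = c') ∨
  (∃ cp ∈ C, ∃ cm ∈ C, orbitC C cp ≠ orbitC C cm ∧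
    C = orbitC C cp ∪ orbitC C cm ∧ orbitC C cm = (orbitC C cp)⁻¹)

/-- A transitive inverse-closed generating set of `G`. -/
def IsTransGenSet (C : Set G) : Prop :=
  (1 : G) ∉ C ∧ (∀ c ∈ C, c⁻¹ ∈ C) ∧ Subgroup.closure C = ⊤ ∧ TransSet C

namespace NormalCClosed

variable {C X Y : Set G}

theorem conj_mem (hX : NormalCClosed C X) {x : G} (hx : x ∈ X) (g : G) : g * x * g⁻¹ ∈ X := by
  simpa using hX x hx g⁻¹ 1 (one_mem _)

theorem apply_mem (hX : NormalCClosed C X) {σ : MulAut G} (hσ : σ ∈ autSub C) {x : G}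
    (hx : x ∈ X) : σ x ∈ X := by
  simpa using hX x hx 1 σ hσ

theorem inter (hX : NormalCClosed C X) (hY : NormalCClosed C Y) : NormalCClosed C (X ∩ Y) :=
  fun x hx g σ hσ => ⟨hX x hx.1 g σ hσ, hY x hx.2 g σ hσ⟩

theorem compl (hX : NormalCClosed C X) : NormalCClosed C Xᶜ := by
  intro x hx g σ hσ hmem
  apply hx
  simpa [mul_assoc] using hX.conj_mem (hX.apply_mem (inv_mem hσ) hmem) g

theorem image_eq (hX : NormalCClosed C X) {σ : MulAut G} (hσ : σ ∈ autSub C) : σ '' X = X := by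
  refine (Set.image_subset_iff.2 fun x hx => hX.apply_mem hσ hx).antisymm fun x hx => ?_
  exact ⟨σ⁻¹ x, hX.apply_mem (inv_mem hσ) hx, by simp⟩

theorem map_closure (hX : NormalCClosed C X) {σ : MulAut G} (hσ : σ ∈ autSub C) :
    (Subgroup.closure X).map σ.toMonoidHom = Subgroup.closure X := by
  rw [MonoidHom.map_closure]
  exact congrArg Subgroup.closure (hX.image_eq hσ)

theorem closure_normal (hX : NormalCClosed C X) : (Subgroup.closure X).Normal where
  conj_mem n hn g := by
    have h : (Subgroup.closure X).map (MulAut.conj g).toMonoidHom ≤ Subgroup.closure X := by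
      rw [MonoidHom.map_closure]
      exact Subgroup.closure_mono (Set.image_subset_iff.2 fun x hx => hX.conj_mem hx g)
    exact h ⟨n, hn, rfl⟩

theorem closure_mem_setA (hX : NormalCClosed C X) (hne : Subgroup.closure X ≠ ⊤) :
    Subgroup.closure X ∈ setA C :=
  ⟨hX.closure_normal, hne, fun _ hσ => hX.map_closure hσ⟩

end NormalCClosed

theorem normalCClosed_of_mem_setA {C : Set G} {N : Subgroup G} (hN : N ∈ setA C) :
    NormalCClosed C N := by
  obtain ⟨hnormal, -, hinv⟩ := hN
  intro x hx g σ hσ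
  rw [← hinv σ hσ]
  exact Subgroup.mem_map_of_mem _ (by simpa [mul_assoc] using hnormal.conj_mem x hx g⁻¹)

theorem normalCClosed_PhiC (C : Set G) : NormalCClosed C (PhiC C) := fun x hx g σ hσ =>
  Subgroup.mem_sInf.2 fun N hN =>
    normalCClosed_of_mem_setA hN.1 x (Subgroup.mem_sInf.1 hx N hN) g σ hσ

theorem exists_mem_setAmax_le [Finite G] {C : Set G} {N : Subgroup G} (hN : N ∈ setA C) :
    ∃ M ∈ setAmax C, N ≤ M := by
  obtain ⟨M, hNM, hM⟩ := (Set.toFinite (setA C)).exists_le_maximal hN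
  exact ⟨M, ⟨hM.1, fun M' hM' h => le_antisymm h (hM.2 hM' h)⟩, hNM⟩

theorem stmt0_general {G : Type*} [Group G] [Finite G] (C : Set G) (X : Set G)
    (hX1 : NormalCClosed C X) (hX2 : Subgroup.closure X = ⊤) :
    NormalCClosed C (X \ (X ∩ (PhiC C : Set G))) ∧
      Subgroup.closure (X \ (X ∩ (PhiC C : Set G))) = ⊤ := by
  have hS : NormalCClosed C (X \ (X ∩ (PhiC C : Set G))) := by
    rw [Set.sdiff_self_inter]
    exact hX1.inter (normalCClosed_PhiC C).compl
  refine ⟨hS, ?_⟩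
  by_contra hne
  obtain ⟨M, hM, hSM⟩ := exists_mem_setAmax_le (hS.closure_mem_setA hne)
  apply hM.1.2.1
  rw [eq_top_iff, ← hX2, Subgroup.closure_le]
  intro x hx
  by_cases hxΦ : x ∈ PhiC C
  · exact sInf_le hM hxΦ
  · exact hSM (Subgroup.subset_closure ⟨hx, fun h => hxΦ h.2⟩)

/-- If `X` is a normal `C`-closed generating set for `G`, then
`X \ (X ∩ Φ(G;C))` is also a normal `C`-closed generating set for `G`. -/
theorem stmt0 {G : Type*} [Group G] [Finite G] [Nontrivial G] (C : Set G)
    (hC : Subgroup.closure C = ⊤) (X : Set G)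
    (hX1 : NormalCClosed C X) (hX2 : Subgroup.closure X = ⊤) :
    NormalCClosed C (X \ (X ∩ (PhiC C : Set G))) ∧
      Subgroup.closure (X \ (X ∩ (PhiC C : Set G))) = ⊤ :=
  stmt0_general C X hX1 hX2

end NETCayley
end

section
/- Let G be a finite group with |G| > 1 and let C be a generating set of G. Then Φ(G;C) is exactly the set of all elements y ∈ G with the following property: for every subset X ⊆ G, if the normal C-closure of X ∪ {y} generates G, then the normal C-closure of X also generates G. -/
/-!
The argument is the one for the Frattini subgroup. The subgroup generated by a normal `C`-closed
set is normal and `Aut(G;C)`-invariant, and conversely every such subgroup is generated by its own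
normal `C`-closure; so `⟨X^{G,Aut(G;C)}⟩ ≠ G` iff `X` lies in some member of
`A(G;C)`, hence (by finiteness) in some maximal one. An element outside a maximal `M` generates `G`
together with `M`, while an element lying in every maximal `M` never helps to generate.
-/

namespace NETCayley

variable {G : Type*} [Group G]

variable (C : Set G)

lemma subset_normalCClosure (X : Set G) : X ⊆ normalCClosure C X :=
  fun x hx => ⟨x, hx, 1, 1, (autSub C).one_mem, by simp⟩

lemma autSub_apply_mem_normalCClosure {X : Set G} {σ : MulAut G} (hσ : σ ∈ autSub C) {y : G}
    (hy : y ∈ normalCClosure C X) : σ y ∈ normalCClosure C X := by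
  obtain ⟨x, hx, g, τ, hτ, rfl⟩ := hy
  exact ⟨x, hx, g, σ * τ, (autSub C).mul_mem hσ hτ, rfl⟩

lemma conjugatesOfSet_normalCClosure (X : Set G) :
    Group.conjugatesOfSet (normalCClosure C X) = normalCClosure C X := by
  refine (Group.subset_conjugatesOfSet).antisymm' fun z hz => ?_
  obtain ⟨_, ⟨x, hx, g, σ, hσ, rfl⟩, hconj⟩ := Group.mem_conjugatesOfSet_iff.mp hz
  obtain ⟨h, rfl⟩ := isConj_iff.mp hconj
  -- conjugating by `h` after `σ` is conjugating by `σ⁻¹ h` before it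
  refine ⟨x, hx, g * σ⁻¹ h⁻¹, σ, hσ, ?_⟩
  simp only [mul_inv_rev, inv_inv, map_mul, map_inv, MulAut.apply_inv_self]
  group

lemma closure_normalCClosure_eq_normalClosure (X : Set G) :
    Subgroup.closure (normalCClosure C X) = Subgroup.normalClosure (normalCClosure C X) := by
  rw [Subgroup.normalClosure, conjugatesOfSet_normalCClosure]

lemma map_closure_normalCClosure (X : Set G) {σ : MulAut G} (hσ : σ ∈ autSub C) :
    (Subgroup.closure (normalCClosure C X)).map σ.toMonoidHom =
      Subgroup.closure (normalCClosure C X) := by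
  rw [MonoidHom.map_closure]
  congr 1
  refine Set.Subset.antisymm ?_ fun y hy => ⟨σ⁻¹ y, ?_, by simp⟩
  · rintro _ ⟨y, hy, rfl⟩
    exact autSub_apply_mem_normalCClosure C hσ hy
  · exact autSub_apply_mem_normalCClosure C ((autSub C).inv_mem hσ) hy

lemma closure_normalCClosure_mem_setA {X : Set G}
    (hX : Subgroup.closure (normalCClosure C X) ≠ ⊤) :
    Subgroup.closure (normalCClosure C X) ∈ setA C := by
  refine ⟨?_, hX, fun σ hσ => map_closure_normalCClosure C X hσ⟩
  rw [closure_normalCClosure_eq_normalClosure]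
  infer_instance

lemma closure_normalCClosure_le_iff {N : Subgroup G} [N.Normal]
    (hN : ∀ σ ∈ autSub C, N.map σ.toMonoidHom = N) {X : Set G} :
    Subgroup.closure (normalCClosure C X) ≤ N ↔ X ⊆ N := by
  refine ⟨fun h => (subset_normalCClosure C X).trans (Subgroup.subset_closure.trans h),
    fun hX => (Subgroup.closure_le N).mpr ?_⟩
  rintro _ ⟨x, hx, g, σ, hσ, rfl⟩
  rw [← hN σ hσ]
  exact ⟨g⁻¹ * x * g, by simpa using Subgroup.Normal.conj_mem ‹_› x (hX hx) g⁻¹, rfl⟩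

lemma mem_setAmax_of_maximal {M : Subgroup G} (hM : Maximal (· ∈ setA C) M) : M ∈ setAmax C :=
  ⟨hM.prop, fun _ hK hMK => le_antisymm hMK (hM.2 hK hMK)⟩

lemma closure_normalCClosure_ne_top_iff [Finite G] {X : Set G} :
    Subgroup.closure (normalCClosure C X) ≠ ⊤ ↔ ∃ M ∈ setAmax C, X ⊆ M := by
  constructor
  · intro hX
    obtain ⟨M, hXM, hM⟩ := Finite.exists_le_maximal (closure_normalCClosure_mem_setA C hX)
    obtain ⟨_, -, hMσ⟩ := hM.prop
    exact ⟨M, mem_setAmax_of_maximal C hM, (closure_normalCClosure_le_iff C hMσ).mp hXM⟩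
  · rintro ⟨M, ⟨⟨_, hMtop, hMσ⟩, -⟩, hXM⟩ htop
    exact hMtop (top_le_iff.mp (htop ▸ (closure_normalCClosure_le_iff C hMσ).mpr hXM))

lemma closure_normalCClosure_union_eq_top {M : Subgroup G} (hM : M ∈ setAmax C) {y : G}
    (hy : y ∉ M) : Subgroup.closure (normalCClosure C ((M : Set G) ∪ {y})) = ⊤ := by
  by_contra hK
  have hMK : M ≤ Subgroup.closure (normalCClosure C ((M : Set G) ∪ {y})) := fun z hz =>
    Subgroup.subset_closure (subset_normalCClosure C _ (Or.inl hz))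
  rw [hM.2 _ (closure_normalCClosure_mem_setA C hK) hMK] at hy
  exact hy (Subgroup.subset_closure (subset_normalCClosure C _ (Or.inr rfl)))

theorem stmt1_general {G : Type*} [Group G] [Finite G] (C : Set G) :
    (PhiC C : Set G) = {y : G | ∀ X : Set G,
      Subgroup.closure (normalCClosure C (X ∪ {y})) = ⊤ →
      Subgroup.closure (normalCClosure C X) = ⊤} := by
  ext y
  simp only [SetLike.mem_coe, PhiC, Subgroup.mem_sInf]
  constructor
  · intro hy X hXy
    by_contra hX
    obtain ⟨M, hM, hXM⟩ := (closure_normalCClosure_ne_top_iff C).mp hX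
    refine (closure_normalCClosure_ne_top_iff C).mpr ⟨M, hM, ?_⟩ hXy
    exact Set.union_subset hXM (Set.singleton_subset_iff.mpr (hy M hM))
  · intro hy M hM
    by_contra hyM
    have hMtop := hy M (closure_normalCClosure_union_eq_top C hM hyM)
    exact (closure_normalCClosure_ne_top_iff C).mpr ⟨M, hM, subset_rfl⟩ hMtop

/-- `Φ(G;C)` is exactly the set of elements `y` such that for every `X ⊆ G`,
if the normal `C`-closure of `X ∪ {y}` generates `G`, then so does the normal `C`-closure
of `X`. -/
theorem stmt1 {G : Type*} [Group G] [Finite G] [Nontrivial G] (C : Set G)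
    (hC : Subgroup.closure C = ⊤) :
    (PhiC C : Set G) = {y : G | ∀ X : Set G,
      Subgroup.closure (normalCClosure C (X ∪ {y})) = ⊤ →
      Subgroup.closure (normalCClosure C X) = ⊤} :=
  stmt1_general C

end NETCayley
end

section
/- Let G be a finite group with |G| > 1 and let C ⊆ G \ {1} be an inverse-closed generating set of G. Then the Frattini subgroup Φ(G) of G (the intersection of all maximal proper subgroups of G) is contained in Φ(G;C). -/
namespace NETCayley

variable {G : Type*} [Group G]

/-- The Frattini subgroup (intersection of all maximal proper subgroups)
is contained in `Φ(G;C)`. -/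
theorem stmt2 {G : Type*} [Group G] [Finite G] [Nontrivial G] (C : Set G)
    (h1 : (1 : G) ∉ C) (hinv : ∀ c ∈ C, c⁻¹ ∈ C) (hgen : Subgroup.closure C = ⊤) :
    sInf {M : Subgroup G | IsCoatom M} ≤ PhiC C := by
  have hfr' : sInf {M : Subgroup G | IsCoatom M} ≤ frattini G := by
    rw [frattini, Order.radical]
    exact le_iInf₂ fun M hM => sInf_le hM
  refine le_trans hfr' (le_sInf fun N hN => ?_)
  obtain ⟨⟨hnorm, hne, hfix⟩, hmax⟩ := hN
  have key : N ⊔ frattini G ∈ setA C := by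
    refine ⟨Subgroup.sup_normal N (frattini G), ?_, ?_⟩
    · intro htop
      exact hne (frattini_nongenerating htop)
    · intro σ hσ
      have hmap : ∀ H : Subgroup G, H.Characteristic → H.map (σ : MulAut G).toMonoidHom = H := by
        intro H hH
        exact (Subgroup.characteristic_iff_map_eq.mp hH) σ
      rw [Subgroup.map_sup, hfix σ hσ, hmap _ frattini_characteristic]
  have := hmax _ key le_sup_left
  rw [this]
  exact le_sup_right

end NETCayley
end

section
/- Let G be a finite group with |G| > 1 and let C ⊆ G \ {1} be an inverse-closed generating set of G. If N ∈ A_max(G;C) and M is a maximal proper subgroup of G with N ≤ M, then N = ⋂_{g ∈ G, σ ∈ Aut(G;C)} (M^g)^σ, the intersection of all images of conjugates of M under elements of Aut(G;C). -/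
namespace NETCayley

variable {G : Type*} [Group G]

/-- If `N ∈ A_max(G;C)` and `M` is a maximal proper subgroup of `G`
with `N ≤ M`, then `N = ⋂_{g ∈ G, σ ∈ Aut(G;C)} (M^g)^σ`. -/
theorem stmt3 {G : Type*} [Group G] [Finite G] [Nontrivial G] (C : Set G)
    (h1 : (1 : G) ∉ C) (hinv : ∀ c ∈ C, c⁻¹ ∈ C) (hgen : Subgroup.closure C = ⊤)
    (N M : Subgroup G) (hN : N ∈ setAmax C) (hM : IsCoatom M) (hNM : N ≤ M) :
    (N : Set G) = ⋂ g : G, ⋂ σ ∈ autSub C, (fun x => σ (g⁻¹ * x * g)) '' (M : Set G) := by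
  obtain ⟨⟨hNnorm, hNtop, hNinv⟩, hNmax⟩ := hN
  set K : Subgroup G := ⨅ g : G, ⨅ σ ∈ autSub C,
    M.map (((MulAut.conj g⁻¹).trans σ : MulAut G) : G →* G) with hK
  have memK : ∀ x : G, x ∈ K ↔ ∀ g : G, ∀ σ ∈ autSub C,
      ∃ m ∈ M, σ (g⁻¹ * m * g) = x := by
    intro x
    simp only [hK, Subgroup.mem_iInf, Subgroup.mem_map, MonoidHom.coe_coe,
      MulEquiv.coe_toMonoidHom, MulEquiv.trans_apply, MulAut.conj_apply, inv_inv]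
  -- map by elements of autSub sends K into K
  have hKleMap : ∀ τ ∈ autSub C, ∀ x ∈ K, τ x ∈ K := by
    intro τ hτ x hx
    rw [memK] at hx ⊢
    intro g σ hσ
    obtain ⟨m, hm, he⟩ := hx g (τ⁻¹ * σ) (mul_mem (inv_mem hτ) hσ)
    refine ⟨m, hm, ?_⟩
    have : τ ((τ⁻¹ * σ) (g⁻¹ * m * g)) = τ x := by rw [he]
    simpa using this
  have hKnormal : K.Normal := by
    constructor
    intro n hn h
    rw [memK] at hn ⊢
    intro g σ hσ
    obtain ⟨m, hm, he⟩ := hn (g * σ⁻¹ h) σ hσ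
    refine ⟨m, hm, ?_⟩
    have e1 : (g * σ⁻¹ h)⁻¹ * m * (g * σ⁻¹ h) = (σ⁻¹ h)⁻¹ * (g⁻¹ * m * g) * (σ⁻¹ h) := by
      group
    have e2 : σ ((σ⁻¹ h)⁻¹ * (g⁻¹ * m * g) * (σ⁻¹ h)) = h⁻¹ * σ (g⁻¹ * m * g) * h := by
      simp [map_mul, map_inv]
    rw [e1, e2] at he
    rw [← he]
    group
  have hKleM : K ≤ M := by
    intro x hx
    obtain ⟨m, hm, he⟩ := (memK x).1 hx 1 1 (one_mem _)
    simpa using he ▸ (by simpa using hm : (1:G)⁻¹ * m * 1 ∈ M)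
  have hKtop : K ≠ ⊤ := fun h => hM.1 (top_le_iff.1 (h ▸ hKleM))
  have hNK : N ≤ K := by
    intro n hn
    rw [memK]
    intro g σ hσ
    have hn' : σ⁻¹ n ∈ N := by
      have := hNinv σ hσ
      rw [← this] at hn
      obtain ⟨y, hy, hye⟩ := hn
      have : y = σ⁻¹ n := by
        simp only [MulEquiv.coe_toMonoidHom] at hye
        rw [← hye]; simp
      rwa [← this]
    have hgn : g * (σ⁻¹ n) * g⁻¹ ∈ N := hNnorm.conj_mem _ hn' g
    refine ⟨g * (σ⁻¹ n) * g⁻¹, hNM hgn, ?_⟩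
    have : g⁻¹ * (g * (σ⁻¹ n) * g⁻¹) * g = σ⁻¹ n := by group
    rw [this]; simp
  have hKA : K ∈ setA C := by
    refine ⟨hKnormal, hKtop, fun σ hσ => ?_⟩
    apply le_antisymm
    · intro y hy
      obtain ⟨x, hx, he⟩ := hy
      simp only [MulEquiv.coe_toMonoidHom] at he
      exact he ▸ hKleMap σ hσ x hx
    · intro x hx
      refine ⟨σ⁻¹ x, hKleMap σ⁻¹ (inv_mem hσ) x hx, ?_⟩
      simp
  have hNKeq : N = K := hNmax K hKA hNK
  rw [hNKeq]
  ext x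
  simp only [Set.mem_iInter, Set.mem_image, SetLike.mem_coe, memK]

end NETCayley
end

section
/- Let G be a finite group with |G| > 1 and let C be a transitive inverse-closed generating set of G. Then C ∩ Φ(G;C) = ∅. -/
/-
A maximal member `N` of `A(G;C)` exists because `G` is finite and `{1} ∈ A(G;C)`. If some `c ∈ C`
lay in `Φ(G;C) ≤ N`, then its `Aut(G;C)`-orbit would lie in `N`; by transitivity this orbit is
all of `C`, or one of two orbits interchanged by inversion, so `C ⊆ N` and `G = ⟨C⟩ ≤ N`,
contradicting `N ≠ G`.
-/

namespace NETCayley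

variable {G : Type*} [Group G]

lemma apply_mem_of_map_eq {C : Set G} {N : Subgroup G}
    (hN : ∀ σ ∈ autSub C, N.map (σ : MulAut G).toMonoidHom = N)
    {σ : MulAut G} (hσ : σ ∈ autSub C) {x : G} (hx : x ∈ N) : σ x ∈ N :=
  hN σ hσ ▸ ⟨x, hx, rfl⟩

lemma orbitC_subset_of_mem {C : Set G} {N : Subgroup G}
    (hN : ∀ σ ∈ autSub C, N.map (σ : MulAut G).toMonoidHom = N) {x : G} (hx : x ∈ N) :
    orbitC C x ⊆ N := by
  rintro _ ⟨σ, hσ, rfl⟩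
  exact apply_mem_of_map_eq hN hσ hx

lemma orbitC_eq_of_mem {C : Set G} {x z : G} (hx : x ∈ orbitC C z) :
    orbitC C x = orbitC C z := by
  obtain ⟨σ, hσ, rfl⟩ := hx
  ext y
  constructor
  · rintro ⟨τ, hτ, rfl⟩
    exact ⟨τ * σ, mul_mem hτ hσ, rfl⟩
  · rintro ⟨τ, hτ, rfl⟩
    exact ⟨τ * σ⁻¹, mul_mem hτ (inv_mem hσ), by simp⟩

lemma TransSet.subset_of_mem {C : Set G} (htrans : TransSet C) {N : Subgroup G}
    (hN : ∀ σ ∈ autSub C, N.map (σ : MulAut G).toMonoidHom = N)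
    {x : G} (hxC : x ∈ C) (hxN : x ∈ N) : C ⊆ N := by
  rcases htrans with htrans | ⟨cp, -, cm, -, -, hC, hcm⟩
  · intro c hc
    obtain ⟨σ, hσ, rfl⟩ := htrans x hxC c hc
    exact apply_mem_of_map_eq hN hσ hxN
  · have hcp : orbitC C cp ⊆ N := by
      rcases hC ▸ hxC with hx | hx
      · exact orbitC_eq_of_mem hx ▸ orbitC_subset_of_mem hN hxN
      · rw [← inv_coe_set, ← Set.inv_subset, ← hcm]
        exact orbitC_eq_of_mem hx ▸ orbitC_subset_of_mem hN hxN
    rw [hC, Set.union_subset_iff, hcm, Set.inv_subset, inv_coe_set]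
    exact ⟨hcp, hcp⟩

lemma bot_mem_setA [Nontrivial G] (C : Set G) : (⊥ : Subgroup G) ∈ setA C :=
  ⟨inferInstance, bot_ne_top, fun σ _ => by simp⟩

lemma setAmax_nonempty [Finite G] [Nontrivial G] (C : Set G) : (setAmax C).Nonempty := by
  obtain ⟨N, hN, hmax⟩ :=
    (Set.toFinite (setA C)).exists_maximalFor id _ ⟨⊥, bot_mem_setA C⟩
  exact ⟨N, hN, fun M hM hle => le_antisymm hle (hmax hM hle)⟩

/-- If `C` is a transitive inverse-closed generating set of `G`,
then `C ∩ Φ(G;C) = ∅`. -/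
theorem stmt4 {G : Type*} [Group G] [Finite G] [Nontrivial G] (C : Set G)
    (hC : IsTransGenSet C) :
    C ∩ (PhiC C : Set G) = ∅ := by
  obtain ⟨-, -, hgen, htrans⟩ := hC
  obtain ⟨N, hN⟩ := setAmax_nonempty C
  obtain ⟨-, hNtop, hNinv⟩ := hN.1
  refine Set.eq_empty_iff_forall_notMem.2 fun x ⟨hxC, hxΦ⟩ => hNtop ?_
  have hxN : x ∈ N := sInf_le hN hxΦ
  rw [eq_top_iff, ← hgen, Subgroup.closure_le]
  exact htrans.subset_of_mem hNinv hxC hxN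

end NETCayley
end

section
/- Let G be a finite group with |G| > 1, let C be a transitive inverse-closed generating set of G, and write Φ = Φ(G;C). Then there is a positive integer ℓ such that |C ∩ yΦ| ∈ {0, ℓ} for every y ∈ G. Moreover, if C ∩ yΦ ≠ ∅ and C ∩ y'Φ ≠ ∅ for y, y' ∈ G, then there exists σ ∈ Aut(G;C) such that (y'Φ)^σ equals either yΦ or y^{-1}Φ. -/
namespace NETCayley

variable {G : Type*} [Group G]

open scoped Pointwise

lemma phi_normal (C : Set G) : (PhiC C).Normal := by
  constructor
  intro n hn g
  rw [PhiC, Subgroup.mem_sInf] at hn ⊢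
  intro N hN
  exact hN.1.1.conj_mem n (hn N hN) g

lemma phi_map {C : Set G} {σ : MulAut G} (hσ : σ ∈ autSub C) (x : G) :
    σ x ∈ PhiC C ↔ x ∈ PhiC C := by
  simp only [PhiC, Subgroup.mem_sInf]
  constructor <;> intro h N hN
  · have hmap := hN.1.2.2 σ hσ
    have hx := h N hN
    rw [← hmap] at hx
    rcases hx with ⟨z, hz, hzeq⟩
    have : z = x := σ.injective hzeq
    rwa [← this]
  · rw [← hN.1.2.2 σ hσ]
    exact ⟨x, h N hN, rfl⟩

lemma coset_mem {C : Set G} {y z : G} :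
    z ∈ y • (PhiC C : Set G) ↔ y⁻¹ * z ∈ PhiC C := by
  rw [Set.mem_smul_set_iff_inv_smul_mem]
  simp [smul_eq_mul]

lemma coset_eq {C : Set G} {y c : G} (h : c ∈ y • (PhiC C : Set G)) :
    y • (PhiC C : Set G) = c • (PhiC C : Set G) := by
  rw [coset_mem] at h
  ext z
  rw [coset_mem, coset_mem]
  constructor
  · intro hz
    have : c⁻¹ * z = (y⁻¹ * c)⁻¹ * (y⁻¹ * z) := by group
    rw [this]
    exact mul_mem (inv_mem h) hz
  · intro hz
    have : y⁻¹ * z = (y⁻¹ * c) * (c⁻¹ * z) := by group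
    rw [this]
    exact mul_mem h hz

lemma image_coset {C : Set G} {σ : MulAut G} (hσ : σ ∈ autSub C) (y : G) :
    ⇑σ '' (y • (PhiC C : Set G)) = σ y • (PhiC C : Set G) := by
  ext z
  constructor
  · rintro ⟨w, hw, rfl⟩
    rw [coset_mem] at hw ⊢
    have : (σ y)⁻¹ * σ w = σ (y⁻¹ * w) := by rw [map_mul, map_inv]
    rw [this, phi_map hσ]
    exact hw
  · intro hz
    rw [coset_mem] at hz
    refine ⟨σ⁻¹ z, ?_, by simp⟩
    rw [coset_mem, ← phi_map hσ]
    have : σ (y⁻¹ * (σ⁻¹ : MulAut G) z) = (σ y)⁻¹ * z := by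
      rw [map_mul, map_inv]; simp
    rw [this]
    exact hz

lemma inv_coset {C : Set G} {y c : G} (h : c ∈ y • (PhiC C : Set G)) :
    c⁻¹ ∈ y⁻¹ • (PhiC C : Set G) := by
  rw [coset_mem] at h ⊢
  have h1 : c * y⁻¹ ∈ PhiC C := by
    have := (phi_normal C).conj_mem _ h y
    have e : y * (y⁻¹ * c) * y⁻¹ = c * y⁻¹ := by group
    rwa [e] at this
  have := inv_mem h1
  have e : (c * y⁻¹)⁻¹ = y⁻¹⁻¹ * c⁻¹ := by group
  rwa [e] at this

lemma same_orbit {C : Set G} {p a b : G} (ha : a ∈ orbitC C p) (hb : b ∈ orbitC C p) :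
    ∃ σ ∈ autSub C, σ a = b := by
  obtain ⟨σ1, h1, e1⟩ := ha
  obtain ⟨σ2, h2, e2⟩ := hb
  refine ⟨σ2 * σ1⁻¹, mul_mem h2 (inv_mem h1), ?_⟩
  have : (σ1⁻¹ : MulAut G) a = p := by
    rw [← e1]; simp
  show σ2 ((σ1⁻¹ : MulAut G) a) = b
  rw [this, e2]

lemma trans_pair {C : Set G} (hC : IsTransGenSet C) {c c' : G} (hc : c ∈ C) (hc' : c' ∈ C) :
    ∃ σ ∈ autSub C, σ c' = c ∨ σ c' = c⁻¹ := by
  rcases hC.2.2.2 with h | ⟨cp, _, cm, _, _, hunion, hinv⟩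
  · obtain ⟨σ, hσ, he⟩ := h c' hc' c hc
    exact ⟨σ, hσ, Or.inl he⟩
  · rw [hunion] at hc hc'
    rcases hc' with h' | h' <;> rcases hc with h | h
    · obtain ⟨σ, hσ, he⟩ := same_orbit h' h
      exact ⟨σ, hσ, Or.inl he⟩
    · rw [hinv, Set.mem_inv] at h
      obtain ⟨σ, hσ, he⟩ := same_orbit h' h
      exact ⟨σ, hσ, Or.inr (by rw [he])⟩
    · rw [hinv, Set.mem_inv] at h'
      obtain ⟨σ, hσ, he⟩ := same_orbit h' h
      refine ⟨σ, hσ, Or.inr ?_⟩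
      have : σ c' = (σ c'⁻¹)⁻¹ := by rw [map_inv]; group
      rw [this, he]
    · obtain ⟨σ, hσ, he⟩ := same_orbit h' h
      exact ⟨σ, hσ, Or.inl he⟩

lemma inv_image_inter {C : Set G} (hC : IsTransGenSet C) (c : G) :
    (C ∩ c⁻¹ • (PhiC C : Set G)).ncard = (C ∩ c • (PhiC C : Set G)).ncard := by
  have himg : (·⁻¹) '' (C ∩ c • (PhiC C : Set G)) = C ∩ c⁻¹ • (PhiC C : Set G) := by
    ext x
    simp only [Set.mem_image, Set.mem_inter_iff]
    constructor
    · rintro ⟨w, ⟨hwC, hwP⟩, rfl⟩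
      exact ⟨hC.2.1 w hwC, inv_coset hwP⟩
    · rintro ⟨hxC, hxP⟩
      refine ⟨x⁻¹, ⟨hC.2.1 x hxC, ?_⟩, by simp⟩
      have := inv_coset hxP
      simpa using this
  rw [← himg, Set.ncard_image_of_injective _ inv_injective]

/-- There is a positive integer `ℓ` with `|C ∩ yΦ| ∈ {0, ℓ}` for every `y`;
moreover if `C ∩ yΦ` and `C ∩ y'Φ` are both nonempty, then some `σ ∈ Aut(G;C)` maps `y'Φ`
to `yΦ` or to `y⁻¹Φ`. -/
theorem stmt5 {G : Type*} [Group G] [Finite G] [Nontrivial G] (C : Set G)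
    (hC : IsTransGenSet C) :
    (∃ ℓ : ℕ, 0 < ℓ ∧ ∀ y : G,
      (C ∩ y • (PhiC C : Set G)).ncard = 0 ∨ (C ∩ y • (PhiC C : Set G)).ncard = ℓ) ∧
    (∀ y y' : G, (C ∩ y • (PhiC C : Set G)).Nonempty → (C ∩ y' • (PhiC C : Set G)).Nonempty →
      ∃ σ ∈ autSub C, (⇑σ '' (y' • (PhiC C : Set G)) = y • (PhiC C : Set G) ∨
        ⇑σ '' (y' • (PhiC C : Set G)) = y⁻¹ • (PhiC C : Set G))) := by
  obtain ⟨c₀, hc₀⟩ : C.Nonempty := by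
    rcases Set.eq_empty_or_nonempty C with rfl | h
    · exfalso
      have := hC.2.2.1
      rw [Subgroup.closure_empty] at this
      exact bot_ne_top this
    · exact h
  have hc₀mem : c₀ ∈ c₀ • (PhiC C : Set G) := by
    rw [coset_mem]; simpa using one_mem (PhiC C)
  constructor
  · refine ⟨(C ∩ c₀ • (PhiC C : Set G)).ncard, ?_, ?_⟩
    · rw [Set.ncard_pos (Set.toFinite _)]
      exact ⟨c₀, hc₀, hc₀mem⟩
    · intro y
      rcases Set.eq_empty_or_nonempty (C ∩ y • (PhiC C : Set G)) with he | ⟨c, hcC, hcP⟩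
      · left; rw [he]; simp
      · right
        have hyc : y • (PhiC C : Set G) = c • (PhiC C : Set G) := coset_eq hcP
        obtain ⟨σ, hσ, hσe⟩ := trans_pair hC hc₀ hcC
        have himg : ⇑σ '' (C ∩ c • (PhiC C : Set G)) = C ∩ σ c • (PhiC C : Set G) := by
          rw [Set.image_inter σ.injective, hσ, image_coset hσ]
        have hcard : (C ∩ c • (PhiC C : Set G)).ncard = (C ∩ σ c • (PhiC C : Set G)).ncard := by
          rw [← himg, Set.ncard_image_of_injective _ σ.injective]
        rcases hσe with he | he
        · rw [hyc, hcard, he]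
        · rw [hyc, hcard, he, inv_image_inter hC]
  · intro y y' ⟨c, hcC, hcP⟩ ⟨c', hc'C, hc'P⟩
    obtain ⟨σ, hσ, hσe⟩ := trans_pair hC hcC hc'C
    refine ⟨σ, hσ, ?_⟩
    have hy' : y' • (PhiC C : Set G) = c' • (PhiC C : Set G) := coset_eq hc'P
    have hy : y • (PhiC C : Set G) = c • (PhiC C : Set G) := coset_eq hcP
    rcases hσe with he | he
    · left
      rw [hy', image_coset hσ, he, ← hy]
    · right
      rw [hy', image_coset hσ, he]
      have : c⁻¹ ∈ y⁻¹ • (PhiC C : Set G) := inv_coset hcP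
      exact (coset_eq this).symm

end NETCayley
end

section
/- Let n ≥ 3, let G = D_{2n} be the dihedral group of order 2n with presentation ⟨a, b | a^n = b^2 = 1, bab = a^{-1}⟩, let C be a transitive inverse-closed generating set of G, let A_0 = Aut(G;C), and let r be the divisor of n determined by A_0 ∩ ⟨φ⟩ = ⟨φ^r⟩. Then C is contained in the set of reflections {ba^j : 0 ≤ j ≤ n-1}, and there exists a non-empty subset I ⊆ {0, 1, …, r-1} such that C = ⋃_{i ∈ I} ba^i⟨a^r⟩; moreover for all i, i' ∈ I there exists σ ∈ A_0 with (ba^i⟨a^r⟩)^σ = ba^{i'}⟨a^r⟩ (that is, A_0/⟨φ^r⟩ acts transitively on the set of cosets {ba^i⟨a^r⟩ : i ∈ I}). -/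
namespace NETCayley

variable {G : Type*} [Group G]

/-- The map underlying the automorphism `τ_k φ^m` of the dihedral group:
`a^i ↦ a^{ki}`, `b a^i ↦ b a^{ki+m}`. -/
def dihMap (n : ℕ) (k m : ZMod n) : DihedralGroup n → DihedralGroup n
  | .r i => .r (k * i)
  | .sr i => .sr (k * i + m)

/-- The automorphism `τ_k φ^m` of the dihedral group (for `k` a unit mod `n`). -/
def dihAut (n : ℕ) (k : (ZMod n)ˣ) (m : ZMod n) : MulAut (DihedralGroup n) where
  toFun := dihMap n (k : ZMod n) m
  invFun := dihMap n ((k⁻¹ : (ZMod n)ˣ) : ZMod n) (-(((k⁻¹ : (ZMod n)ˣ) : ZMod n) * m))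
  left_inv := by
    have hk : ((k⁻¹ : (ZMod n)ˣ) : ZMod n) * ((k : (ZMod n)ˣ) : ZMod n) = 1 := k.inv_mul
    rintro (i | i) <;> simp only [dihMap] <;> congr 1 <;> linear_combination (i : ZMod n) * hk
  right_inv := by
    have hk : ((k : (ZMod n)ˣ) : ZMod n) * ((k⁻¹ : (ZMod n)ˣ) : ZMod n) = 1 := k.mul_inv
    rintro (i | i) <;> simp only [dihMap] <;> congr 1
    · linear_combination (i : ZMod n) * hk
    · linear_combination ((i : ZMod n) - m) * hk
  map_mul' := by
    rintro (i | i) (j | j) <;>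
      simp only [DihedralGroup.r_mul_r, DihedralGroup.r_mul_sr, DihedralGroup.sr_mul_r,
        DihedralGroup.sr_mul_sr, dihMap] <;> congr 1 <;> ring


/-- The coset `b a^i ⟨a^r⟩ = {b a^{i + tr} : t ∈ ℤ}` of reflections in the dihedral group. -/
def reflCoset (n r i : ℕ) : Set (DihedralGroup n) :=
  {x | ∃ t : ℤ, x = DihedralGroup.sr ((i : ZMod n) + (t : ZMod n) * (r : ZMod n))}

section Aux

open DihedralGroup

variable {n : ℕ}

lemma dihAut_apply_r (k : (ZMod n)ˣ) (m i : ZMod n) :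
    dihAut n k m (r i) = r ((k : ZMod n) * i) := rfl

lemma dihAut_apply_sr (k : (ZMod n)ˣ) (m i : ZMod n) :
    dihAut n k m (sr i) = sr ((k : ZMod n) * i + m) := rfl

lemma r_pow' (x : ZMod n) (m : ℕ) :
    (r x : DihedralGroup n) ^ m = r ((m : ZMod n) * x) := by
  induction m with
  | zero => rw [pow_zero, one_def]; norm_num
  | succ m ih =>
      rw [pow_succ, ih, r_mul_r]
      congr 1
      push_cast
      ring

/-- Every automorphism of `D_{2n}` (`n ≥ 3`) is of the form `τ_k φ^m`. -/
lemma exists_dihAut (hn : 3 ≤ n) (σ : MulAut (DihedralGroup n)) :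
    ∃ (k : (ZMod n)ˣ) (m : ZMod n), σ = dihAut n k m := by
  have hnz : NeZero n := ⟨by omega⟩
  have hord : orderOf (σ (r 1)) = n := by
    have := orderOf_injective σ.toMonoidHom σ.injective (r 1)
    simpa [orderOf_r_one] using this
  obtain ⟨k, hk⟩ : ∃ k, σ (r 1) = r k := by
    cases h : σ (r 1) with
    | r k => exact ⟨k, rfl⟩
    | sr j =>
        rw [h, orderOf_sr] at hord
        omega
  have hkord : orderOf (r k : DihedralGroup n) = n := hk ▸ hord
  rw [orderOf_r, Nat.div_eq_self] at hkord
  have hgcd : Nat.gcd n k.val = 1 := by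
    rcases hkord with h | h
    · omega
    · exact h
  set u : (ZMod n)ˣ := ZMod.unitOfCoprime k.val (Nat.Coprime.symm hgcd) with hu
  have huk : (u : ZMod n) = k := by
    simp [hu, ZMod.unitOfCoprime, ZMod.natCast_rightInverse k]
  have hrot : ∀ i : ZMod n, σ (r i) = r (k * i) := by
    intro i
    have h1 : (r i : DihedralGroup n) = (r 1) ^ i.val := by
      rw [r_one_pow, ZMod.natCast_rightInverse i]
    rw [h1, map_pow, hk, r_pow']
    congr 1
    rw [ZMod.natCast_rightInverse i]
    ring
  obtain ⟨m, hm⟩ : ∃ m, σ (sr 0) = sr m := by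
    cases h0 : σ (sr 0) with
    | sr m => exact ⟨m, rfl⟩
    | r j =>
        exfalso
        obtain ⟨x, hx⟩ := σ.surjective (sr 0)
        cases x with
        | r i =>
            rw [hrot i] at hx
            simp at hx
        | sr i =>
            have h1 : (sr i : DihedralGroup n) = sr 0 * r i := by
              rw [sr_mul_r, zero_add]
            rw [h1, map_mul, h0, hrot, r_mul_r] at hx
            simp at hx
  refine ⟨u, m, ?_⟩
  ext x
  cases x with
  | r i =>
      rw [dihAut_apply_r, huk, hrot]
  | sr i =>
      rw [dihAut_apply_sr, huk]
      have h1 : (sr i : DihedralGroup n) = sr 0 * r i := by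
        rw [sr_mul_r, zero_add]
      rw [h1, map_mul, hm, hrot, sr_mul_r]
      congr 1
      ring

lemma dihAut_one_mul (s t : ZMod n) :
    dihAut n 1 s * dihAut n 1 t = dihAut n 1 (s + t) := by
  ext x
  cases x with
  | r i =>
      rw [MulAut.mul_apply, dihAut_apply_r, dihAut_apply_r, dihAut_apply_r]
      congr 1
      simp
  | sr i =>
      rw [MulAut.mul_apply, dihAut_apply_sr, dihAut_apply_sr, dihAut_apply_sr]
      congr 1
      simp
      ring

lemma dihAut_one_zero : dihAut n 1 0 = 1 := by
  ext x
  cases x with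
  | r i => rw [dihAut_apply_r]; simp
  | sr i => rw [dihAut_apply_sr]; simp

lemma dihAut_one_pow (t : ℕ) : (dihAut n 1 1) ^ t = dihAut n 1 (t : ZMod n) := by
  induction t with
  | zero => simpa using dihAut_one_zero.symm
  | succ t ih =>
      rw [pow_succ, ih, dihAut_one_mul]
      congr 1
      push_cast
      ring

lemma dihAut_one_inv (s : ZMod n) : (dihAut n 1 s)⁻¹ = dihAut n 1 (-s) := by
  apply inv_eq_of_mul_eq_one_right
  rw [dihAut_one_mul, add_neg_cancel, dihAut_one_zero]

lemma dihAut_one_zpow (t : ℤ) : (dihAut n 1 1) ^ t = dihAut n 1 (t : ZMod n) := by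
  cases t with
  | ofNat m => simpa using dihAut_one_pow m
  | negSucc m =>
      rw [zpow_negSucc, dihAut_one_pow, dihAut_one_inv]
      congr 1
      push_cast
      ring

/-- The rotation subgroup of the dihedral group. -/
def rotSub (n : ℕ) : Subgroup (DihedralGroup n) where
  carrier := {x | ∃ i, x = r i}
  one_mem' := ⟨0, one_def⟩
  mul_mem' := by
    rintro _ _ ⟨i, rfl⟩ ⟨j, rfl⟩
    exact ⟨i + j, (r_mul_r i j).symm⟩
  inv_mem' := by
    rintro _ ⟨i, rfl⟩
    refine ⟨-i, ?_⟩
    apply inv_eq_iff_mul_eq_one.mpr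
    rw [r_mul_r, add_neg_cancel, one_def]

end Aux

/-- For a transitive inverse-closed generating set `C` of `D_{2n}` with
`Aut(G;C) ∩ ⟨φ⟩ = ⟨φ^r⟩`, `C` consists of reflections and is a union of cosets
`b a^i ⟨a^r⟩`, `i ∈ I`, on which `Aut(G;C)` acts transitively. -/
theorem stmt10 (n : ℕ) (hn : 3 ≤ n) (C : Set (DihedralGroup n)) (hC : IsTransGenSet C)
    (r : ℕ) (hr : r ∣ n)
    (hA : autSub C ⊓ Subgroup.zpowers (dihAut n 1 1) =
      Subgroup.zpowers ((dihAut n 1 1) ^ r)) :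
    C ⊆ {x | ∃ j : ZMod n, x = DihedralGroup.sr j} ∧
    ∃ I : Finset ℕ, I.Nonempty ∧ (∀ i ∈ I, i < r) ∧
      C = ⋃ i ∈ I, reflCoset n r i ∧
      ∀ i ∈ I, ∀ i' ∈ I, ∃ σ ∈ autSub C,
        ⇑σ '' reflCoset n r i = reflCoset n r i' := by
  classical
  have hnz : NeZero n := ⟨by omega⟩
  obtain ⟨h1C, hinvC, hgen, htrans⟩ := hC
  have hrpos : 0 < r := by
    rcases Nat.eq_zero_or_pos r with h | h
    · subst h; rw [zero_dvd_iff] at hr; omega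
    · exact h
  -- C contains a reflection
  obtain ⟨j0, hj0⟩ : ∃ j, DihedralGroup.sr j ∈ C := by
    by_contra h
    push_neg at h
    have hsub : C ⊆ (rotSub n : Set (DihedralGroup n)) := by
      intro c hc
      cases c with
      | r i => exact ⟨i, rfl⟩
      | sr j => exact absurd hc (h j)
    have hle : Subgroup.closure C ≤ rotSub n := (Subgroup.closure_le _).mpr hsub
    rw [hgen] at hle
    obtain ⟨i, hi⟩ := hle (Subgroup.mem_top (DihedralGroup.sr 0))
    simp at hi
  -- the two-orbit case is impossible, so Aut(G;C) is transitive on C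
  have htr : ∀ c ∈ C, ∀ c' ∈ C, ∃ σ ∈ autSub C, σ c = c' := by
    rcases htrans with h | ⟨cp, hcp, cm, _hcm, hne, hunion, hinv2⟩
    · exact h
    exfalso
    cases hp : cp with
    | sr j =>
        -- orbit of a reflection is inverse-closed, contradicting distinctness
        apply hne
        rw [hinv2]
        have hself : ∀ y ∈ orbitC C cp, y⁻¹ = y := by
          rintro y ⟨σ, hσ, rfl⟩
          obtain ⟨k, m, rfl⟩ := exists_dihAut hn σ
          rw [hp, dihAut_apply_sr]
          apply inv_eq_of_mul_eq_one_right
          exact DihedralGroup.sr_mul_self _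
        ext y
        rw [Set.mem_inv]
        constructor
        · intro hy
          rw [hself y hy]
          exact hy
        · intro hy
          have h2 := hself _ hy
          rw [inv_inv] at h2
          rw [h2]
          exact hy
    | r j =>
        -- orbit of a rotation consists of rotations, so C has no reflections
        have hrot : C ⊆ (rotSub n : Set (DihedralGroup n)) := by
          rw [hunion, hinv2]
          rintro c (⟨σ, hσ, rfl⟩ | hc)
          · obtain ⟨k, m, rfl⟩ := exists_dihAut hn σ
            rw [hp, dihAut_apply_r]
            exact ⟨_, rfl⟩
          · rw [Set.mem_inv] at hc
            obtain ⟨σ, hσ, hc⟩ := hc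
            obtain ⟨k, m, rfl⟩ := exists_dihAut hn σ
            rw [hp, dihAut_apply_r] at hc
            have : c = (DihedralGroup.r ((k : ZMod n) * j))⁻¹ := by
              rw [hc, inv_inv]
            rw [this]
            exact (rotSub n).inv_mem ⟨_, rfl⟩
        obtain ⟨i, hi⟩ := hrot hj0
        simp at hi
  -- every element of C is a reflection
  have hCrefl : ∀ c ∈ C, ∃ j : ZMod n, c = DihedralGroup.sr j := by
    intro c hc
    obtain ⟨σ, hσ, hσc⟩ := htr _ hj0 c hc
    obtain ⟨k, m, rfl⟩ := exists_dihAut hn σ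
    rw [dihAut_apply_sr] at hσc
    exact ⟨_, hσc.symm⟩
  refine ⟨hCrefl, ?_⟩
  -- φ^r stabilizes C
  have hφr : (dihAut n 1 1) ^ r ∈ autSub C := by
    have h1 : (dihAut n 1 1) ^ r ∈ Subgroup.zpowers ((dihAut n 1 1) ^ r) :=
      Subgroup.mem_zpowers _
    rw [← hA] at h1
    exact h1.1
  -- shifting reflections by multiples of r preserves C
  have hshift : ∀ j : ZMod n, DihedralGroup.sr j ∈ C → ∀ t : ℤ,
      DihedralGroup.sr (j + (t : ZMod n) * (r : ZMod n)) ∈ C := by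
    intro j hj t
    have hσmem : ((dihAut n 1 1) ^ r) ^ t ∈ autSub C := Subgroup.zpow_mem _ hφr t
    have heq : ((dihAut n 1 1) ^ r) ^ t = dihAut n 1 ((t : ZMod n) * (r : ZMod n)) := by
      rw [← zpow_natCast, ← zpow_mul, dihAut_one_zpow]
      congr 1
      push_cast
      ring
    have hC' : ⇑(((dihAut n 1 1) ^ r) ^ t) '' C = C := hσmem
    rw [← hC']
    refine ⟨DihedralGroup.sr j, hj, ?_⟩
    rw [heq, dihAut_apply_sr]
    congr 1
    simp
  -- the index set
  set I : Finset ℕ := (Finset.range r).filter (fun i => DihedralGroup.sr (i : ZMod n) ∈ C)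
    with hI
  have hImem : ∀ i : ℕ, i ∈ I ↔ i < r ∧ DihedralGroup.sr (i : ZMod n) ∈ C := by
    intro i
    simp [hI]
  -- key decomposition facts
  have hdecomp : ∀ j : ZMod n, DihedralGroup.sr j ∈ C →
      (j.val % r) ∈ I ∧ DihedralGroup.sr j ∈ reflCoset n r (j.val % r) := by
    intro j hj
    set i := j.val % r with hi
    set q := j.val / r with hq
    have hiq : r * q + i = j.val := Nat.div_add_mod j.val r
    have hji : (i : ZMod n) = j - (q : ZMod n) * (r : ZMod n) := by
      have hv : ((j.val : ℕ) : ZMod n) = j := ZMod.natCast_rightInverse j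
      rw [← hiq] at hv
      push_cast at hv
      linear_combination hv
    constructor
    · rw [hImem]
      refine ⟨Nat.mod_lt _ hrpos, ?_⟩
      have := hshift j hj (-(q : ℤ))
      rwa [show j + ((-(q : ℤ) : ℤ) : ZMod n) * (r : ZMod n) = (i : ZMod n) by
        rw [hji]; push_cast; ring] at this
    · exact ⟨(q : ℤ), by rw [hji]; congr 1; push_cast; ring⟩
  -- image of a coset under an automorphism in Aut(G;C)
  have himg : ∀ σ ∈ autSub C, ∀ i i' : ℕ,
      σ (DihedralGroup.sr (i : ZMod n)) = DihedralGroup.sr ((i' : ℕ) : ZMod n) →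
      ⇑σ '' reflCoset n r i = reflCoset n r i' := by
    intro σ hσ i i' hii
    obtain ⟨k, m, rfl⟩ := exists_dihAut hn σ
    rw [dihAut_apply_sr] at hii
    have hkim : (k : ZMod n) * (i : ZMod n) + m = ((i' : ℕ) : ZMod n) := by
      exact DihedralGroup.sr.inj hii
    ext x
    constructor
    · rintro ⟨y, ⟨t, rfl⟩, rfl⟩
      obtain ⟨s, hs⟩ := ZMod.intCast_surjective ((k : ZMod n) * (t : ZMod n))
      refine ⟨s, ?_⟩
      rw [dihAut_apply_sr]
      congr 1
      rw [hs]
      linear_combination hkim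
    · rintro ⟨t, rfl⟩
      obtain ⟨s, hs⟩ :=
        ZMod.intCast_surjective (((k⁻¹ : (ZMod n)ˣ) : ZMod n) * (t : ZMod n))
      refine ⟨DihedralGroup.sr ((i : ZMod n) + (s : ZMod n) * (r : ZMod n)), ⟨s, rfl⟩, ?_⟩
      rw [dihAut_apply_sr]
      have hks : (k : ZMod n) * (s : ZMod n) = (t : ZMod n) := by
        rw [hs, ← mul_assoc, k.mul_inv, one_mul]
      congr 1
      linear_combination hkim + (r : ZMod n) * hks
  refine ⟨I, ?_, ?_, ?_, ?_⟩
  · -- nonempty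
    exact ⟨j0.val % r, (hdecomp j0 hj0).1⟩
  · intro i hi
    exact ((hImem i).mp hi).1
  · -- C is the union of the cosets
    ext c
    constructor
    · intro hc
      obtain ⟨j, rfl⟩ := hCrefl c hc
      obtain ⟨h1, h2⟩ := hdecomp j hc
      exact Set.mem_biUnion h1 h2
    · intro hc
      rw [Set.mem_iUnion₂] at hc
      obtain ⟨i, hi, t, rfl⟩ := hc
      have hiC := ((hImem i).mp hi).2
      exact hshift _ hiC t
  · -- transitivity on cosets
    intro i hi i' hi'
    have hiC := ((hImem i).mp hi).2
    have hi'C := ((hImem i').mp hi').2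
    obtain ⟨σ, hσ, hσc⟩ := htr _ hiC _ hi'C
    exact ⟨σ, hσ, himg σ hσ i i' hσc⟩

end NETCayley
end

section
/- Let n ≥ 3, let G = D_{2n} = ⟨a, b | a^n = b^2 = 1, bab = a^{-1}⟩, and let k be an integer with 1 ≤ k ≤ n-2, gcd(k, n) = 1 and n dividing 1 + k + k^2 + k^3. Set C = {b, ba, ba^{k+1}, ba^{k^2+k+1}} (exponents read modulo n). Then |C| = 4, C is a transitive inverse-closed generating set of G on which Aut(G;C) acts transitively, and: if k = n/2 - 1 and n ≡ 0 (mod 4), then Aut(G;C) = ⟨τ_{n/2+1}, τ_{n/2-1}φ⟩ is isomorphic to the dihedral group of order 8; otherwise Aut(G;C) = ⟨τ_kφ⟩ is cyclic of order 4. -/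
namespace NETCayley

variable {G : Type*} [Group G]

/-!
Write `K` for `k` in `ℤ/n`, so that `1 + K + K² + K³ = 0` and `C = {b a^{s_j} : j < 4}` with
`s_j = 1 + K + ⋯ + K^{j-1}`. An endomorphism of `D_{2n}` sending `b` and `ba` to reflections is
affine, `b a^i ↦ b a^{u i + m}`. The automorphism `τ_k φ` is `i ↦ K i + 1`, which sends `s_j` to
`s_{j+1}` and `s_3` to `s_4 = s_0`; so it cycles `C` and `Aut(G;C)` is transitive. An element of
`Aut(G;C)` fixing `b` is `i ↦ u i` and permutes `{1, 1 + K, 1 + K + K²}`, which forces `u = 1`, or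
`K² = 1` and `u = -K`. Hence `Aut(G;C) = ⟨τ_k φ⟩ ≅ C₄` unless `K² = 1`, i.e. unless `k = n/2 - 1`
and `4 ∣ n`; in that case `τ_{-k}` is a reflection of the square `C` and
`Aut(G;C) = ⟨τ_k φ, τ_{-k}⟩ ≅ D₈`.
-/

open DihedralGroup

section Dihedral

variable {n : ℕ}

lemma closure_sr_zero_sr_one :
    Subgroup.closure {sr 0, sr 1} = (⊤ : Subgroup (DihedralGroup n)) := by
  set H := Subgroup.closure ({sr 0, sr 1} : Set (DihedralGroup n))
  have h0 : sr 0 ∈ H := Subgroup.subset_closure (by simp)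
  have hr : ∀ i : ZMod n, r i ∈ H := by
    have h1 : r 1 ∈ H := by
      simpa [sr_mul_sr] using mul_mem h0 (Subgroup.subset_closure (by simp) : sr 1 ∈ H)
    intro i
    obtain ⟨z, rfl⟩ := ZMod.intCast_surjective i
    simpa [r_one_zpow] using zpow_mem h1 z
  rw [eq_top_iff]
  rintro (i | i) -
  · exact hr i
  · simpa [sr_mul_r] using mul_mem h0 (hr i)

def dihHom (n : ℕ) (u m : ZMod n) : DihedralGroup n →* DihedralGroup n where
  toFun := dihMap n u m
  map_one' := congrArg r (mul_zero u)
  map_mul' := by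
    rintro (i | i) (j | j) <;>
      simp only [r_mul_r, r_mul_sr, sr_mul_r, sr_mul_sr, dihMap] <;> congr 1 <;> ring

@[simp] lemma coe_dihHom (u m : ZMod n) : ⇑(dihHom n u m) = dihMap n u m := rfl

lemma coe_eq_dihMap_of_map_sr {F : Type*} [FunLike F (DihedralGroup n) (DihedralGroup n)]
    [MonoidHomClass F (DihedralGroup n) (DihedralGroup n)] (f : F) {m m' : ZMod n}
    (h0 : f (sr 0) = sr m) (h1 : f (sr 1) = sr m') : ⇑f = dihMap n (m' - m) m := by
  have : (f : DihedralGroup n →* DihedralGroup n) = dihHom n (m' - m) m := by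
    refine MonoidHom.eq_of_eqOn_dense closure_sr_zero_sr_one ?_
    rintro x (rfl | rfl)
    · simp [h0, dihMap]
    · simp [h1, dihMap]
  exact congrArg DFunLike.coe this

lemma dihMap_comp (u m u' m' : ZMod n) :
    dihMap n u m ∘ dihMap n u' m' = dihMap n (u * u') (u * m' + m) := by
  funext x
  cases x <;> simp only [Function.comp, dihMap] <;> congr 1 <;> ring

lemma dihMap_one_zero : dihMap n 1 0 = id := by
  funext x
  cases x <;> simp [dihMap]

end Dihedral

section GeomRing

variable {R : Type*} [CommRing R] {K : R}

def geomUnit (hP : 1 + K + K ^ 2 + K ^ 3 = 0) : Rˣ :=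
  Units.mkOfMulEqOne K (-(1 + K + K ^ 2)) (by linear_combination -hP)

@[simp] lemma coe_geomUnit (hP : 1 + K + K ^ 2 + K ^ 3 = 0) : (geomUnit hP : R) = K := rfl

lemma pow_four_eq_one_of_geom (hP : 1 + K + K ^ 2 + K ^ 3 = 0) : K ^ 4 = 1 := by
  linear_combination (K - 1) * hP

lemma geom_sum_four_eq_zero (hP : 1 + K + K ^ 2 + K ^ 3 = 0) :
    ∑ i ∈ Finset.range 4, K ^ i = 0 := by
  simp only [Finset.sum_range_succ, Finset.sum_range_zero]
  linear_combination hP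

lemma geom_partial_sums_pairwise_ne (hP : 1 + K + K ^ 2 + K ^ 3 = 0) (hK : K + 1 ≠ 0) :
    (0 : R) ≠ 1 ∧ (0 : R) ≠ K + 1 ∧ (0 : R) ≠ K ^ 2 + K + 1 ∧ (1 : R) ≠ K + 1 ∧
      (1 : R) ≠ K ^ 2 + K + 1 ∧ K + 1 ≠ K ^ 2 + K + 1 := by
  refine ⟨?_, ?_, ?_, ?_, ?_, ?_⟩ <;> grind

lemma eq_one_or_of_mul_mem (hP : 1 + K + K ^ 2 + K ^ 3 = 0) (hK : K + 1 ≠ 0) {u : R}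
    (h1 : u ∈ ({1, K + 1, K ^ 2 + K + 1} : Set R))
    (h2 : u * (K + 1) ∈ ({1, K + 1, K ^ 2 + K + 1} : Set R))
    (h3 : u * (K ^ 2 + K + 1) ∈ ({1, K + 1, K ^ 2 + K + 1} : Set R)) :
    u = 1 ∨ (K ^ 2 = 1 ∧ u = -K) := by
  simp only [Set.mem_insert_iff, Set.mem_singleton_iff] at h1 h2 h3
  -- For `u = K + 1` no choice of the other two images is consistent; for `u = K² + K + 1 = -K³`
  -- the images of `K + 1` and `K² + K + 1` are `K² + K` and `K²`, which forces `K² = 1`.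
  rcases h1 with rfl | rfl | rfl
  · exact .inl rfl
  · grind
  · grind

end GeomRing

section DihedralPresentation

variable {m : ℕ} {H : Type*} [Group H] {a b : H}

lemma zpow_eq_zpow_of_intCast_eq (ha : a ^ m = 1) {x y : ℤ} (h : (x : ZMod m) = y) :
    a ^ x = a ^ y := by
  obtain ⟨c, hc⟩ := (ZMod.intCast_eq_intCast_iff_dvd_sub x y m).mp h
  rw [show y = x + m * c by omega, zpow_add, zpow_mul, zpow_natCast, ha, one_zpow, mul_one]

lemma zpow_mul_eq_mul_zpow_neg (hb : b * b = 1) (hab : b * a * b = a⁻¹) (x : ℤ) :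
    a ^ x * b = b * a ^ (-x) := by
  have hb' : b⁻¹ = b := inv_eq_of_mul_eq_one_right hb
  have : b * a ^ x * b = a ^ (-x) := by
    calc b * a ^ x * b = (b * a * b⁻¹) ^ x := by rw [conj_zpow, hb']
      _ = a ^ (-x) := by rw [hb', hab, inv_zpow, zpow_neg]
  rw [← this, ← mul_assoc, ← mul_assoc, hb, one_mul]

lemma cast_zpow_eq_zpow_of_intCast_eq (ha : a ^ m = 1) (i : ZMod m) (x : ℤ)
    (h : (x : ZMod m) = i) : a ^ (i.cast : ℤ) = a ^ x :=
  zpow_eq_zpow_of_intCast_eq ha (by rw [ZMod.intCast_zmod_cast, h])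

def dihedralLift (ha : a ^ m = 1) (hb : b * b = 1) (hab : b * a * b = a⁻¹) :
    DihedralGroup m →* H where
  toFun
    | r i => a ^ (i.cast : ℤ)
    | sr i => b * a ^ (i.cast : ℤ)
  map_one' := by simp only [one_def, ZMod.cast_zero, zpow_zero]
  map_mul' := by
    have key := cast_zpow_eq_zpow_of_intCast_eq ha
    have hconj := zpow_mul_eq_mul_zpow_neg hb hab
    rintro (i | i) (j | j) <;> simp only [r_mul_r, r_mul_sr, sr_mul_r, sr_mul_sr]
    · rw [← zpow_add]; exact key _ _ (by push_cast [ZMod.intCast_zmod_cast]; rfl)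
    · rw [← mul_assoc, hconj, mul_assoc, ← zpow_add]
      exact congrArg (b * ·) (key _ _ (by push_cast [ZMod.intCast_zmod_cast]; ring))
    · rw [mul_assoc, ← zpow_add]
      exact congrArg (b * ·) (key _ _ (by push_cast [ZMod.intCast_zmod_cast]; rfl))
    · rw [mul_assoc, ← mul_assoc (a ^ _), hconj, ← mul_assoc, ← mul_assoc, hb, one_mul,
        ← zpow_add]
      exact key _ _ (by push_cast [ZMod.intCast_zmod_cast]; ring)

@[simp] lemma dihedralLift_r (ha : a ^ m = 1) (hb : b * b = 1) (hab : b * a * b = a⁻¹)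
    (i : ZMod m) : dihedralLift ha hb hab (r i) = a ^ (i.cast : ℤ) := rfl

@[simp] lemma dihedralLift_sr (ha : a ^ m = 1) (hb : b * b = 1) (hab : b * a * b = a⁻¹)
    (i : ZMod m) : dihedralLift ha hb hab (sr i) = b * a ^ (i.cast : ℤ) := rfl

lemma dihedralLift_injective (ha : orderOf a = m) (hb : b * b = 1) (hab : b * a * b = a⁻¹)
    (hba : b ∉ Subgroup.zpowers a) :
    Function.Injective (dihedralLift (ha ▸ pow_orderOf_eq_one a) hb hab) := by
  rw [injective_iff_map_eq_one]
  rintro (i | i) h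
  · rw [dihedralLift_r, ← orderOf_dvd_iff_zpow_eq_one, ha, ← ZMod.intCast_zmod_eq_zero_iff_dvd,
      ZMod.intCast_zmod_cast] at h
    rw [h, r_zero]
  · rw [dihedralLift_sr, mul_eq_one_iff_eq_inv, ← zpow_neg] at h
    exact absurd (h ▸ Subgroup.zpow_mem_zpowers a _) hba

lemma range_dihedralLift (ha : a ^ m = 1) (hb : b * b = 1) (hab : b * a * b = a⁻¹) :
    (dihedralLift ha hb hab).range = Subgroup.closure {b, a} := by
  apply le_antisymm
  · rintro _ ⟨i | i, rfl⟩
    · exact zpow_mem (Subgroup.subset_closure (by simp)) _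
    · exact mul_mem (Subgroup.subset_closure (by simp))
        (zpow_mem (Subgroup.subset_closure (by simp)) _)
  · rw [Subgroup.closure_le]
    rintro _ (rfl | rfl)
    · exact ⟨sr 0, by simp⟩
    · exact ⟨r 1, by simpa using cast_zpow_eq_zpow_of_intCast_eq ha 1 1 Int.cast_one⟩

lemma nonempty_closure_mulEquiv_dihedralGroup (ha : orderOf a = m) (hb : b * b = 1)
    (hab : b * a * b = a⁻¹) (hba : b ∉ Subgroup.zpowers a) :
    Nonempty (Subgroup.closure {b, a} ≃* DihedralGroup m) :=
  ⟨((MonoidHom.ofInjective (dihedralLift_injective ha hb hab hba)).trans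
    (MulEquiv.subgroupCongr (range_dihedralLift _ hb hab))).symm⟩

end DihedralPresentation

lemma nonempty_zpowers_mulEquiv_zmod {H : Type*} [Group H] (g : H) :
    Nonempty (Subgroup.zpowers g ≃* Multiplicative (ZMod (orderOf g))) := by
  rw [← Nat.card_zpowers]
  exact ⟨(zmodCyclicMulEquiv inferInstance).symm⟩

lemma apply_mem_of_mem_autSub {G : Type*} [Group G] {C : Set G} {σ : MulAut G}
    (hσ : σ ∈ autSub C) {c : G} (hc : c ∈ C) : σ c ∈ C :=
  (show ⇑σ '' C = C from hσ) ▸ Set.mem_image_of_mem σ hc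

lemma exists_mem_apply_eq_of_forall_mem {G : Type*} [Group G] {H : Subgroup (MulAut G)}
    {C : Set G} {x : G} (hC : ∀ c ∈ C, ∃ σ ∈ H, σ x = c) :
    ∀ c ∈ C, ∀ c' ∈ C, ∃ σ ∈ H, σ c = c' := by
  intro c hc c' hc'
  obtain ⟨σ, hσ, rfl⟩ := hC c hc
  obtain ⟨σ', hσ', rfl⟩ := hC c' hc'
  exact ⟨σ' * σ⁻¹, mul_mem hσ' (inv_mem hσ), by simp⟩

section FourReflections

variable {n : ℕ}

def fourReflections (K : ZMod n) : Set (DihedralGroup n) :=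
  {sr 0, sr 1, sr (K + 1), sr (K ^ 2 + K + 1)}

lemma fourReflections_eq_insert (K : ZMod n) :
    fourReflections K = insert (sr 0) (sr '' {1, K + 1, K ^ 2 + K + 1}) := by
  simp [fourReflections, Set.image_insert_eq]

lemma one_notMem_fourReflections (K : ZMod n) : (1 : DihedralGroup n) ∉ fourReflections K := by
  rintro (h | h | h | h) <;> cases h

lemma inv_mem_fourReflections {K : ZMod n} {c : DihedralGroup n} (hc : c ∈ fourReflections K) :
    c⁻¹ ∈ fourReflections K := by
  simp only [fourReflections, Set.mem_insert_iff, Set.mem_singleton_iff] at hc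
  rcases hc with rfl | rfl | rfl | rfl <;> simp [fourReflections, inv_sr]

lemma closure_fourReflections (K : ZMod n) : Subgroup.closure (fourReflections K) = ⊤ :=
  top_le_iff.mp (closure_sr_zero_sr_one ▸
    Subgroup.closure_mono (by simp [fourReflections, Set.insert_subset_iff]))

lemma ncard_fourReflections {K : ZMod n} (hP : 1 + K + K ^ 2 + K ^ 3 = 0) (hK : K + 1 ≠ 0) :
    (fourReflections K).ncard = 4 := by
  obtain ⟨h01, h0K, h0S, h1K, h1S, hKS⟩ := geom_partial_sums_pairwise_ne hP hK
  exact Set.ncard_eq_four.mpr ⟨_, _, _, _, mt sr.inj h01, mt sr.inj h0K, mt sr.inj h0S,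
    mt sr.inj h1K, mt sr.inj h1S, mt sr.inj hKS, rfl⟩

variable {K : ZMod n} (hP : 1 + K + K ^ 2 + K ^ 3 = 0)

/-- `τ_k φ` in the paper's notation. -/
def cycleAut : MulAut (DihedralGroup n) := dihAut n (geomUnit hP) 1

/-- `τ_{-k}` in the paper's notation. -/
def reflAut : MulAut (DihedralGroup n) := dihAut n (-geomUnit hP) 0

@[simp] lemma coe_cycleAut : ⇑(cycleAut hP) = dihMap n K 1 := rfl

@[simp] lemma coe_reflAut : ⇑(reflAut hP) = dihMap n (-K) 0 := rfl

lemma coe_cycleAut_pow (j : ℕ) :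
    ⇑(cycleAut hP ^ j) = dihMap n (K ^ j) (∑ i ∈ Finset.range j, K ^ i) := by
  induction j with
  | zero => simp [dihMap_one_zero]
  | succ j ih =>
    rw [pow_succ', MulAut.coe_mul, ih, coe_cycleAut, dihMap_comp, pow_succ', geom_sum_succ]

lemma cycleAut_pow_four : cycleAut hP ^ 4 = 1 := by
  apply DFunLike.coe_injective
  rw [coe_cycleAut_pow, pow_four_eq_one_of_geom hP, geom_sum_four_eq_zero hP, dihMap_one_zero]
  rfl

lemma exists_cycleAut_pow_apply_eq {c : DihedralGroup n} (hc : c ∈ fourReflections K) :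
    ∃ j < 4, (cycleAut hP ^ j) (sr 0) = c := by
  simp only [fourReflections, Set.mem_insert_iff, Set.mem_singleton_iff] at hc
  rcases hc with rfl | rfl | rfl | rfl
  exacts [⟨0, by norm_num, rfl⟩, ⟨1, by norm_num, by simp [dihMap]⟩,
    ⟨2, by norm_num, by simp [coe_cycleAut_pow, dihMap, Finset.sum_range_succ]; ring⟩,
    ⟨3, by norm_num, by simp [coe_cycleAut_pow, dihMap, Finset.sum_range_succ]; ring⟩]

lemma cycleAut_mem_autSub : cycleAut hP ∈ autSub (fourReflections K) := by
  show ⇑(cycleAut hP) '' _ = _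
  have h3 : K * (K ^ 2 + K + 1) + 1 = 0 := by linear_combination hP
  have h2 : K * (K + 1) + 1 = K ^ 2 + K + 1 := by ring
  ext x
  simp only [fourReflections, Set.image_insert_eq, Set.image_singleton, coe_cycleAut, dihMap,
    mul_zero, zero_add, mul_one, h2, h3, Set.mem_insert_iff, Set.mem_singleton_iff]
  tauto

lemma eq_one_or_eq_reflAut (hK : K + 1 ≠ 0) {ρ : MulAut (DihedralGroup n)}
    (hρ : ρ ∈ autSub (fourReflections K)) (h0 : ρ (sr 0) = sr 0) :
    ρ = 1 ∨ (K ^ 2 = 1 ∧ ρ = reflAut hP) := by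
  set S : Set (ZMod n) := {1, K + 1, K ^ 2 + K + 1}
  obtain ⟨h01, h0K, h0S, -, -, -⟩ := geom_partial_sums_pairwise_ne hP hK
  have hmaps : ∀ y ∈ S, ρ (sr y) ∈ sr '' S := by
    intro y hy
    have hyC : sr y ∈ fourReflections K := by
      rw [fourReflections_eq_insert]; exact .inr ⟨y, hy, rfl⟩
    have hρy := apply_mem_of_mem_autSub hρ hyC
    rw [fourReflections_eq_insert] at hρy
    refine hρy.resolve_left fun h => ?_
    have : y = 0 := sr.inj (ρ.injective (h.trans h0.symm))
    simp only [S, Set.mem_insert_iff, Set.mem_singleton_iff] at hy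
    rcases hy with rfl | rfl | rfl
    exacts [h01 this.symm, h0K this.symm, h0S this.symm]
  obtain ⟨u, hu, h1⟩ := hmaps 1 (by simp [S])
  have hρu : ⇑ρ = dihMap n u 0 := by simpa using coe_eq_dihMap_of_map_sr ρ h0 h1.symm
  have hmul : ∀ y ∈ S, u * y ∈ S := fun y hy => by
    obtain ⟨z, hz, hzy⟩ := hmaps y hy
    rw [hρu, dihMap, add_zero] at hzy
    exact sr.inj hzy ▸ hz
  rcases eq_one_or_of_mul_mem hP hK hu (hmul _ (by simp [S])) (hmul _ (by simp [S])) with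
    rfl | ⟨hK2, rfl⟩
  · exact .inl (DFunLike.coe_injective (by rw [hρu, dihMap_one_zero]; rfl))
  · exact .inr ⟨hK2, DFunLike.coe_injective hρu⟩

lemma exists_eq_of_mem_autSub (hK : K + 1 ≠ 0) {σ : MulAut (DihedralGroup n)}
    (hσ : σ ∈ autSub (fourReflections K)) :
    ∃ j : ℕ, σ = cycleAut hP ^ j ∨ (K ^ 2 = 1 ∧ σ = cycleAut hP ^ j * reflAut hP) := by
  obtain ⟨j, -, hj⟩ := exists_cycleAut_pow_apply_eq hP
    (apply_mem_of_mem_autSub hσ (by simp [fourReflections] : sr 0 ∈ fourReflections K))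
  have hρ : (cycleAut hP ^ j)⁻¹ * σ ∈ autSub (fourReflections K) :=
    mul_mem (inv_mem (pow_mem (cycleAut_mem_autSub hP) j)) hσ
  have h0 : ((cycleAut hP ^ j)⁻¹ * σ) (sr 0) = sr 0 := by
    rw [MulAut.mul_apply, ← hj, MulAut.inv_apply_self]
  refine ⟨j, ?_⟩
  rcases eq_one_or_eq_reflAut hP hK hρ h0 with h | ⟨hK2, h⟩
  · exact .inl (inv_mul_eq_one.mp h).symm
  · exact .inr ⟨hK2, inv_mul_eq_iff_eq_mul.mp h⟩

end FourReflections

section Structure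

variable {n : ℕ} {K : ZMod n} (hP : 1 + K + K ^ 2 + K ^ 3 = 0)

lemma orderOf_cycleAut (hK : K + 1 ≠ 0) : orderOf (cycleAut hP) = 4 := by
  refine orderOf_eq_prime_pow (p := 2) (n := 1) (fun h => hK ?_) (cycleAut_pow_four hP)
  have := congrArg (· (sr 0)) h
  simp only [coe_cycleAut_pow, dihMap] at this
  simpa [add_comm] using this

lemma autSub_eq_zpowers (hK : K + 1 ≠ 0) (hK2 : K ^ 2 ≠ 1) :
    autSub (fourReflections K) = Subgroup.zpowers (cycleAut hP) := by
  refine le_antisymm (fun σ hσ => ?_) (Subgroup.zpowers_le.mpr (cycleAut_mem_autSub hP))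
  obtain ⟨j, rfl | ⟨h, -⟩⟩ := exists_eq_of_mem_autSub hP hK hσ
  · exact Subgroup.npow_mem_zpowers _ j
  · exact absurd h hK2

lemma reflAut_mem_autSub (hK2 : K ^ 2 = 1) : reflAut hP ∈ autSub (fourReflections K) := by
  show ⇑(reflAut hP) '' _ = _
  have h2K : 2 * K + 2 = 0 := by linear_combination hP - (K + 1) * hK2
  have h1 : -K = K ^ 2 + K + 1 := by linear_combination -hK2 - h2K
  have h2 : -K * (K + 1) = K + 1 := by linear_combination -hK2 - h2K
  have h3 : -K * (K ^ 2 + K + 1) = 1 := by linear_combination -hP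
  ext x
  simp only [fourReflections, Set.image_insert_eq, Set.image_singleton, coe_reflAut, dihMap,
    mul_zero, add_zero, mul_one, Set.mem_insert_iff, Set.mem_singleton_iff]
  rw [h2, h3, h1]
  tauto

lemma reflAut_mul_self (hK2 : K ^ 2 = 1) : reflAut hP * reflAut hP = 1 := by
  apply DFunLike.coe_injective
  simp only [MulAut.coe_mul, MulAut.coe_one, coe_reflAut, dihMap_comp]
  convert dihMap_one_zero (n := n) using 2
  · linear_combination hK2
  · ring

lemma reflAut_mul_cycleAut_mul_reflAut (hK2 : K ^ 2 = 1) :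
    reflAut hP * cycleAut hP * reflAut hP = (cycleAut hP)⁻¹ := by
  refine eq_inv_of_mul_eq_one_left (DFunLike.coe_injective ?_)
  simp only [MulAut.coe_mul, MulAut.coe_one, coe_reflAut, coe_cycleAut, dihMap_comp]
  convert dihMap_one_zero (n := n) using 2
  · linear_combination (K ^ 2 + 1) * hK2
  · linear_combination K * hK2

lemma reflAut_notMem_zpowers (hK : K + 1 ≠ 0) :
    reflAut hP ∉ Subgroup.zpowers (cycleAut hP) := by
  classical
  intro h
  have hfin : IsOfFinOrder (cycleAut hP) := by
    rw [← orderOf_pos_iff, orderOf_cycleAut hP hK]; norm_num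
  rw [hfin.mem_zpowers_iff_mem_range_orderOf, orderOf_cycleAut hP hK, Finset.mem_image] at h
  obtain ⟨j, hj, hτ⟩ := h
  have h0 := congrArg (· (sr 0)) hτ
  have h1 := congrArg (· (r 1)) hτ
  simp only [coe_cycleAut_pow, coe_reflAut, dihMap, sr.injEq, r.injEq] at h0 h1
  obtain ⟨h01, h0K, h0S, -, -, -⟩ := geom_partial_sums_pairwise_ne hP hK
  simp only [Finset.mem_range] at hj
  interval_cases j <;> simp only [Finset.sum_range_succ, Finset.sum_range_zero] at h0 h1 <;> grind

lemma autSub_eq_closure (hK : K + 1 ≠ 0) (hK2 : K ^ 2 = 1) :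
    autSub (fourReflections K) = Subgroup.closure {reflAut hP, cycleAut hP} := by
  refine le_antisymm (fun σ hσ => ?_) ?_
  · have hτ : reflAut hP ∈ Subgroup.closure {reflAut hP, cycleAut hP} :=
      Subgroup.subset_closure (by simp)
    have hσ₀ : cycleAut hP ∈ Subgroup.closure {reflAut hP, cycleAut hP} :=
      Subgroup.subset_closure (by simp)
    obtain ⟨j, rfl | ⟨-, rfl⟩⟩ := exists_eq_of_mem_autSub hP hK hσ
    · exact pow_mem hσ₀ j
    · exact mul_mem (pow_mem hσ₀ j) hτ
  · rw [Subgroup.closure_le]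
    rintro _ (rfl | rfl)
    exacts [reflAut_mem_autSub hP hK2, cycleAut_mem_autSub hP]

end Structure

section Arithmetic

variable {n k : ℕ}

lemma natCast_add_one_ne_zero (hk : k + 1 < n) : ((k : ZMod n) + 1) ≠ 0 := by
  rw [← Nat.cast_add_one, Ne, ZMod.natCast_eq_zero_iff]
  exact Nat.not_dvd_of_pos_of_lt k.succ_pos hk

lemma natCast_sq_eq_one_iff (hk : k + 1 < n) (hdvd : n ∣ 1 + k + k ^ 2 + k ^ 3) :
    (k : ZMod n) ^ 2 = 1 ↔ k = n / 2 - 1 ∧ n % 4 = 0 := by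
  have hP : (1 + k + k ^ 2 + k ^ 3 : ZMod n) = 0 := by
    exact_mod_cast (ZMod.natCast_eq_zero_iff _ n).mpr hdvd
  constructor
  · intro hK2
    have h2 : ((2 * (k + 1) : ℕ) : ZMod n) = 0 := by
      push_cast; linear_combination hP - ((k : ZMod n) + 1) * hK2
    have hsq : (((k + 1) * (k + 1) : ℕ) : ZMod n) = 0 := by
      push_cast; linear_combination hP - (k : ZMod n) * hK2
    rw [ZMod.natCast_eq_zero_iff] at h2 hsq
    have hn : 2 * (k + 1) = n := Nat.eq_of_dvd_of_lt_two_mul (by omega) h2 (by omega)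
    have heven : 2 ∣ k + 1 := Nat.dvd_of_mul_dvd_mul_right (by omega) (hn.symm ▸ hsq)
    omega
  · rintro ⟨hk, h4⟩
    obtain ⟨t, rfl⟩ : ∃ t, n = 4 * t := ⟨n / 4, by omega⟩
    have hk' : k + 1 = 2 * t := by omega
    have h2 : ((2 * (k + 1) : ℕ) : ZMod (4 * t)) = 0 := by
      rw [hk', show 2 * (2 * t) = 4 * t by ring, ZMod.natCast_self]
    have hsq : (((k + 1) ^ 2 : ℕ) : ZMod (4 * t)) = 0 := by
      rw [hk', show (2 * t) ^ 2 = 4 * t * t by ring, Nat.cast_mul, ZMod.natCast_self, zero_mul]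
    push_cast at h2 hsq
    linear_combination hsq - h2

end Arithmetic

theorem stmt14_general (n : ℕ) (hn : 3 ≤ n) (k : ℕ) (hk2 : k ≤ n - 2)
    (hdvd : n ∣ 1 + k + k ^ 2 + k ^ 3)
    (C : Set (DihedralGroup n))
    (hCdef : C = {DihedralGroup.sr 0, DihedralGroup.sr 1,
      DihedralGroup.sr ((k + 1 : ℕ) : ZMod n),
      DihedralGroup.sr ((k ^ 2 + k + 1 : ℕ) : ZMod n)}) :
    C.ncard = 4 ∧ IsTransGenSet C ∧
    (∀ c ∈ C, ∀ c' ∈ C, ∃ σ ∈ autSub C, σ c = c') ∧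
    ((k = n / 2 - 1 ∧ n % 4 = 0) →
      ∃ u v : (ZMod n)ˣ, (u : ZMod n) = ((n / 2 + 1 : ℕ) : ZMod n) ∧
        (v : ZMod n) = ((n / 2 - 1 : ℕ) : ZMod n) ∧
        autSub C = Subgroup.closure {dihAut n u 0, dihAut n v 1} ∧
        Nonempty (autSub C ≃* DihedralGroup 4)) ∧
    (¬(k = n / 2 - 1 ∧ n % 4 = 0) →
      ∃ w : (ZMod n)ˣ, (w : ZMod n) = (k : ZMod n) ∧
        autSub C = Subgroup.zpowers (dihAut n w 1) ∧
        Nonempty (autSub C ≃* Multiplicative (ZMod 4))) := by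
  have hk : k + 1 < n := by omega
  have hP : 1 + (k : ZMod n) + (k : ZMod n) ^ 2 + (k : ZMod n) ^ 3 = 0 := by
    exact_mod_cast (ZMod.natCast_eq_zero_iff _ n).mpr hdvd
  have hK := natCast_add_one_ne_zero hk
  obtain rfl : C = fourReflections (k : ZMod n) := by rw [hCdef, fourReflections]; push_cast; rfl
  have htrans := exists_mem_apply_eq_of_forall_mem fun c hc =>
    (exists_cycleAut_pow_apply_eq hP hc).elim fun j hj =>
      ⟨_, pow_mem (cycleAut_mem_autSub hP) j, hj.2⟩
  refine ⟨ncard_fourReflections hP hK, ⟨one_notMem_fourReflections _,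
    fun _ => inv_mem_fourReflections, closure_fourReflections _, .inl htrans⟩, htrans,
    fun hD8 => ?_, fun hC4 => ?_⟩
  · have hK2 := (natCast_sq_eq_one_iff hk hdvd).mpr hD8
    refine ⟨-geomUnit hP, geomUnit hP, ?_, by simp [hD8.1], autSub_eq_closure hP hK hK2, ?_⟩
    · rw [Units.val_neg, coe_geomUnit, neg_eq_iff_add_eq_zero, ← Nat.cast_add,
        show k + (n / 2 + 1) = n by omega, ZMod.natCast_self]
    · rw [autSub_eq_closure hP hK hK2]
      exact nonempty_closure_mulEquiv_dihedralGroup (orderOf_cycleAut hP hK)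
        (reflAut_mul_self hP hK2) (reflAut_mul_cycleAut_mul_reflAut hP hK2)
        (reflAut_notMem_zpowers hP hK)
  · have hK2 := mt (natCast_sq_eq_one_iff hk hdvd).mp hC4
    refine ⟨geomUnit hP, rfl, autSub_eq_zpowers hP hK hK2, ?_⟩
    rw [autSub_eq_zpowers hP hK hK2]
    exact orderOf_cycleAut hP hK ▸ nonempty_zpowers_mulEquiv_zmod _

/-- For `1 ≤ k ≤ n-2` with `gcd(k,n) = 1` and `n ∣ 1+k+k²+k³`, the set
`C = {b, ba, ba^{k+1}, ba^{k²+k+1}}` has size 4, is a transitive inverse-closed generating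
set on which `Aut(G;C)` acts transitively, and `Aut(G;C)` is `D₈` if `k = n/2-1` and
`n ≡ 0 (mod 4)`, and cyclic of order 4 otherwise. -/
theorem stmt14 (n : ℕ) (hn : 3 ≤ n) (k : ℕ) (hk1 : 1 ≤ k) (hk2 : k ≤ n - 2)
    (hgcd : Nat.Coprime k n) (hdvd : n ∣ 1 + k + k ^ 2 + k ^ 3)
    (C : Set (DihedralGroup n))
    (hCdef : C = {DihedralGroup.sr 0, DihedralGroup.sr 1,
      DihedralGroup.sr ((k + 1 : ℕ) : ZMod n),
      DihedralGroup.sr ((k ^ 2 + k + 1 : ℕ) : ZMod n)}) :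
    C.ncard = 4 ∧ IsTransGenSet C ∧
    (∀ c ∈ C, ∀ c' ∈ C, ∃ σ ∈ autSub C, σ c = c') ∧
    ((k = n / 2 - 1 ∧ n % 4 = 0) →
      ∃ u v : (ZMod n)ˣ, (u : ZMod n) = ((n / 2 + 1 : ℕ) : ZMod n) ∧
        (v : ZMod n) = ((n / 2 - 1 : ℕ) : ZMod n) ∧
        autSub C = Subgroup.closure {dihAut n u 0, dihAut n v 1} ∧
        Nonempty (autSub C ≃* DihedralGroup 4)) ∧
    (¬(k = n / 2 - 1 ∧ n % 4 = 0) →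
      ∃ w : (ZMod n)ˣ, (w : ZMod n) = (k : ZMod n) ∧
        autSub C = Subgroup.zpowers (dihAut n w 1) ∧
        Nonempty (autSub C ≃* Multiplicative (ZMod 4))) :=
  stmt14_general n hn k hk2 hdvd C hCdef

end NETCayley
end

section
/- Let n ≥ 3 and let G = D_{2n} = ⟨a, b | a^n = b^2 = 1, bab = a^{-1}⟩ (all exponents read modulo n). (i) If k and ℓ both satisfy 1 ≤ k, ℓ ≤ n-2, gcd(k,n) = gcd(ℓ,n) = 1, n divides 1+k+k^2+k^3 and n divides 1+ℓ+ℓ^2+ℓ^3, and if the sets {b, ba, ba^{k+1}, ba^{k^2+k+1}} and {b, ba, ba^{ℓ+1}, ba^{ℓ^2+ℓ+1}} are equal, then k = ℓ. (ii) If i and j both satisfy 2 ≤ i, j ≤ n-1, gcd(2i-1,n) = gcd(2j-1,n) = 1, n divides 2i(i-1) and n divides 2j(j-1), i ≠ j, and the sets {b, ba, ba^i, ba^{1-i}} and {b, ba, ba^j, ba^{1-j}} are equal, then i + j = n + 1. -/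
namespace NETCayley

variable {G : Type*} [Group G]

lemma natCast_inj_of_lt {n x y : ℕ} (hx : x < n) (hy : y < n)
    (h : (x : ZMod n) = (y : ZMod n)) : x = y := by
  rw [ZMod.natCast_eq_natCast_iff', Nat.mod_eq_of_lt hx, Nat.mod_eq_of_lt hy] at h
  exact h

lemma aux1 {n : ℕ} (hn : 3 ≤ n) {K L : ZMod n} (hKu : IsUnit K) (hLu : IsUnit L)
    (hK3 : K ^ 3 + K ^ 2 + K + 1 = 0) (hL3 : L ^ 3 + L ^ 2 + L + 1 = 0)
    (h3 : K = L ^ 2 + L) (h4 : L = K ^ 2 + K) : False := by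
  have c1 : K ^ 2 * (K ^ 2 + 2 * K + 2) = 0 := by
    linear_combination (-1 : ZMod n) * h3 - (K ^ 2 + K + L + 1) * h4
  have c1' : L ^ 2 * (L ^ 2 + 2 * L + 2) = 0 := by
    linear_combination (-1 : ZMod n) * h4 - (L ^ 2 + L + K + 1) * h3
  have hA : K ^ 2 + 2 * K + 2 = 0 := ((hKu.pow 2).mul_right_eq_zero).mp c1
  have hB : L ^ 2 + 2 * L + 2 = 0 := ((hLu.pow 2).mul_right_eq_zero).mp c1'
  have c3 : K ^ 2 + K - 1 = 0 := by linear_combination K * hA - hK3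
  have d3 : L ^ 2 + L - 1 = 0 := by linear_combination L * hB - hL3
  have c4 : K + 3 = 0 := by linear_combination hA - c3
  have d4 : L + 3 = 0 := by linear_combination hB - d3
  have h5 : (5 : ZMod n) = 0 := by linear_combination c3 - (K - 2) * c4
  have h9 : (9 : ZMod n) = 0 := by linear_combination (-1 : ZMod n) * h3 + c4 - (L - 2) * d4
  have hone : ((1 : ℕ) : ZMod n) = 0 := by push_cast; linear_combination 2 * h5 - h9
  have := Nat.le_of_dvd one_pos ((ZMod.natCast_eq_zero_iff 1 n).mp hone)
  omega

/-- Uniqueness of the parameters in the two Talebi families. -/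
theorem stmt15 (n : ℕ) (hn : 3 ≤ n) :
    (∀ k l : ℕ, 1 ≤ k → k ≤ n - 2 → 1 ≤ l → l ≤ n - 2 →
      Nat.Coprime k n → Nat.Coprime l n →
      n ∣ 1 + k + k ^ 2 + k ^ 3 → n ∣ 1 + l + l ^ 2 + l ^ 3 →
      ({DihedralGroup.sr 0, DihedralGroup.sr 1, DihedralGroup.sr ((k + 1 : ℕ) : ZMod n),
          DihedralGroup.sr ((k ^ 2 + k + 1 : ℕ) : ZMod n)} : Set (DihedralGroup n)) =
        {DihedralGroup.sr 0, DihedralGroup.sr 1, DihedralGroup.sr ((l + 1 : ℕ) : ZMod n),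
          DihedralGroup.sr ((l ^ 2 + l + 1 : ℕ) : ZMod n)} →
      k = l) ∧
    (∀ i j : ℕ, 2 ≤ i → i ≤ n - 1 → 2 ≤ j → j ≤ n - 1 →
      Nat.gcd (2 * i - 1) n = 1 → Nat.gcd (2 * j - 1) n = 1 →
      n ∣ 2 * i * (i - 1) → n ∣ 2 * j * (j - 1) → i ≠ j →
      ({DihedralGroup.sr 0, DihedralGroup.sr 1, DihedralGroup.sr (i : ZMod n),
          DihedralGroup.sr (1 - (i : ZMod n))} : Set (DihedralGroup n)) =
        {DihedralGroup.sr 0, DihedralGroup.sr 1, DihedralGroup.sr (j : ZMod n),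
          DihedralGroup.sr (1 - (j : ZMod n))} →
      i + j = n + 1) := by
  constructor
  · intro k l hk1 hk2 hl1 hl2 hkc hlc hkd hld hset
    have hK3 : (k : ZMod n) ^ 3 + (k : ZMod n) ^ 2 + (k : ZMod n) + 1 = 0 := by
      have := (ZMod.natCast_eq_zero_iff (1 + k + k ^ 2 + k ^ 3) n).mpr hkd
      push_cast at this; linear_combination this
    have hL3 : (l : ZMod n) ^ 3 + (l : ZMod n) ^ 2 + (l : ZMod n) + 1 = 0 := by
      have := (ZMod.natCast_eq_zero_iff (1 + l + l ^ 2 + l ^ 3) n).mpr hld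
      push_cast at this; linear_combination this
    have hKu : IsUnit ((k : ZMod n)) := ⟨ZMod.unitOfCoprime k hkc, ZMod.coe_unitOfCoprime k hkc⟩
    have hLu : IsUnit ((l : ZMod n)) := ⟨ZMod.unitOfCoprime l hlc, ZMod.coe_unitOfCoprime l hlc⟩
    have hm1 : DihedralGroup.sr ((k + 1 : ℕ) : ZMod n) ∈
        ({DihedralGroup.sr 0, DihedralGroup.sr 1, DihedralGroup.sr ((l + 1 : ℕ) : ZMod n),
          DihedralGroup.sr ((l ^ 2 + l + 1 : ℕ) : ZMod n)} : Set (DihedralGroup n)) := by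
      rw [← hset]; simp
    have hm2 : DihedralGroup.sr ((l + 1 : ℕ) : ZMod n) ∈
        ({DihedralGroup.sr 0, DihedralGroup.sr 1, DihedralGroup.sr ((k + 1 : ℕ) : ZMod n),
          DihedralGroup.sr ((k ^ 2 + k + 1 : ℕ) : ZMod n)} : Set (DihedralGroup n)) := by
      rw [hset]; simp
    simp only [Set.mem_insert_iff, Set.mem_singleton_iff, DihedralGroup.sr.injEq] at hm1 hm2
    rcases hm1 with h | h | h | hKL
    · rw [show (0 : ZMod n) = ((0 : ℕ) : ZMod n) by push_cast; ring] at h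
      have := natCast_inj_of_lt (by omega) (by omega) h; omega
    · rw [show (1 : ZMod n) = ((1 : ℕ) : ZMod n) by push_cast; ring] at h
      have := natCast_inj_of_lt (by omega) (by omega) h; omega
    · have := natCast_inj_of_lt (by omega) (by omega) h; omega
    · rcases hm2 with h | h | h | hLK
      · rw [show (0 : ZMod n) = ((0 : ℕ) : ZMod n) by push_cast; ring] at h
        have := natCast_inj_of_lt (by omega) (by omega) h; omega
      · rw [show (1 : ZMod n) = ((1 : ℕ) : ZMod n) by push_cast; ring] at h
        have := natCast_inj_of_lt (by omega) (by omega) h; omega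
      · have := natCast_inj_of_lt (by omega) (by omega) h; omega
      · exfalso
        push_cast at hKL hLK
        exact aux1 hn hKu hLu hK3 hL3 (by linear_combination hKL) (by linear_combination hLK)
  · intro i j hi2 hi1 hj2 hj1 _ _ _ _ hij hset
    have hm1 : DihedralGroup.sr ((i : ℕ) : ZMod n) ∈
        ({DihedralGroup.sr 0, DihedralGroup.sr 1, DihedralGroup.sr (j : ZMod n),
          DihedralGroup.sr (1 - (j : ZMod n))} : Set (DihedralGroup n)) := by
      rw [← hset]; simp
    simp only [Set.mem_insert_iff, Set.mem_singleton_iff, DihedralGroup.sr.injEq] at hm1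
    rcases hm1 with h | h | h | h
    · rw [show (0 : ZMod n) = ((0 : ℕ) : ZMod n) by push_cast; ring] at h
      have := natCast_inj_of_lt (by omega) (by omega) h; omega
    · rw [show (1 : ZMod n) = ((1 : ℕ) : ZMod n) by push_cast; ring] at h
      have := natCast_inj_of_lt (by omega) (by omega) h; omega
    · have := natCast_inj_of_lt (by omega) (by omega) h; omega
    · have hcast : ((i + j : ℕ) : ZMod n) = ((1 : ℕ) : ZMod n) := by
        push_cast; linear_combination h
      have hmod : (i + j) % n = 1 % n := (ZMod.natCast_eq_natCast_iff' _ _ _).mp hcast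
      have h1n : 1 % n = 1 := Nat.mod_eq_of_lt (by omega)
      by_cases hlt : i + j < n
      · rw [Nat.mod_eq_of_lt hlt] at hmod; omega
      · have h2n : i + j - n < n := by omega
        rw [Nat.mod_eq_sub_mod (by omega), Nat.mod_eq_of_lt h2n] at hmod
        omega

end NETCayley
end
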